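/- arXiv:2203.04247 — 4 statements merged into one kernel-verified Lean document; each statement's English description precedes it below -/
import Mathlib

section
/- Let 0 < γ < mn, δ ∈ ℝ, and p⃗ a vector of exponents. Let v_1,…,v_m be weights and set w = Π_{i=1}^m v_i. If (w,v⃗) ∈ ℍ_m(p⃗,γ,δ), then necessarily δ = γ - n/p. -/
/-!
Test the `ℍ` condition on the balls `B = B(0, R)`. Since `1 ≤ w ∏ vᵢ⁻¹` a.e., Hölder's inequality
gives `|B| ^ (∑ 1/pᵢ') ≤ ‖w‖_{L^∞(B)} ∏ ‖vᵢ⁻¹‖_{L^{pᵢ'}(B)}`, and on `B` the kernel factor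
`(|B|^{1/n} + |y|) ^ (-(n - γᵢ + 1/m))` is at least `(cR) ^ (-(n - γᵢ + 1/m))`. So the condition
yields `R ^ (γ - δ - n/p) ≤ C'` for every `R > 0`, which forces the exponent to vanish.
-/

open MeasureTheory Metric Set
open scoped ENNReal NNReal BigOperators Classical

noncomputable section

/-- Euclidean `n`-space. -/
abbrev Rn (n : ℕ) := EuclideanSpace ℝ (Fin n)

/-- The conjugate exponent in `ℝ≥0∞`. -/
def conjE (q : ℝ≥0∞) : ℝ≥0∞ :=
  if q = 1 then ∞ else if q = ∞ then 1
  else ENNReal.ofReal (q.toReal / (q.toReal - 1))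

/-- An `L^q`-type quantity on the set `s` for an `ℝ≥0∞`-valued function `g`:
the usual integral expression for `q < ∞`, and the essential supremum for `q = ∞`. -/
def lpOn {n : ℕ} (q : ℝ≥0∞) (g : Rn n → ℝ≥0∞) (s : Set (Rn n)) : ℝ≥0∞ :=
  if q = ∞ then essSup g (volume.restrict s)
  else (∫⁻ y in s, g y ^ q.toReal) ^ (1 / q.toReal)

/-- A weight: measurable, positive and finite a.e., and locally integrable. -/
def IsWeight {n : ℕ} (u : Rn n → ℝ≥0∞) : Prop :=
  Measurable u ∧ (∀ᵐ x ∂(volume : Measure (Rn n)), 0 < u x ∧ u x < ∞) ∧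
    ∀ (x : Rn n) (R : ℝ), 0 < R → ∫⁻ y in ball x R, u y < ∞

/-- The `i`-th factor in the `ℍ_m(p⃗,γ,δ)` condition, where `q = p_i'` is the
conjugate exponent of `p_i` (an essential supremum when `p_i = 1`). -/
def HmFactor {n : ℕ} (m : ℕ) (γi : ℝ) (q : ℝ≥0∞) (vi : Rn n → ℝ≥0∞)
    (xB : Rn n) (R : ℝ) : ℝ≥0∞ :=
  lpOn q
    (fun y => (vi y)⁻¹ *
      (volume (ball xB R) ^ ((n : ℝ)⁻¹) + edist xB y) ^
        (-((n : ℝ) - γi + 1 / (m : ℝ))))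
    Set.univ

/-- The class `ℍ_m(p⃗,γ,δ)` for a pair `(w, v⃗)`. -/
def Hm {n : ℕ} (m : ℕ) (γv : Fin m → ℝ) (δ : ℝ) (p : Fin m → ℝ≥0∞)
    (w : Rn n → ℝ≥0∞) (v : Fin m → Rn n → ℝ≥0∞) : Prop :=
  ∃ C : ℝ, 0 < C ∧ ∀ (xB : Rn n) (R : ℝ), 0 < R →
    essSup w (volume.restrict (ball xB R)) *
        volume (ball xB R) ^ (-((δ - 1) / (n : ℝ))) *
        ∏ i, HmFactor m (γv i) (conjE (p i)) (v i) xB R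
      ≤ ENNReal.ofReal C

/-- The global condition associated to `ℍ_m(p⃗,γ,δ)`. -/
def GlobalCond {n : ℕ} (m : ℕ) (γv : Fin m → ℝ) (δ : ℝ) (p : Fin m → ℝ≥0∞)
    (w : Rn n → ℝ≥0∞) (v : Fin m → Rn n → ℝ≥0∞) : Prop :=
  ∃ C : ℝ, 0 < C ∧ ∀ (xB : Rn n) (R : ℝ), 0 < R →
    essSup w (volume.restrict (ball xB R)) *
        volume (ball xB R) ^ (-((δ - 1) / (n : ℝ))) *
        ∏ i, lpOn (conjE (p i))
          (fun y => (v i y)⁻¹ * edist xB y ^ (-((n : ℝ) - γv i + 1 / (m : ℝ))))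
          (ball xB R)ᶜ
      ≤ ENNReal.ofReal C

/-- The local condition associated to `ℍ_m(p⃗,γ,δ)`. -/
def LocalCond {n : ℕ} (m : ℕ) (γ δ : ℝ) (p : Fin m → ℝ≥0∞)
    (w : Rn n → ℝ≥0∞) (v : Fin m → Rn n → ℝ≥0∞) : Prop :=
  ∃ C : ℝ, 0 < C ∧ ∀ (xB : Rn n) (R : ℝ), 0 < R →
    essSup w (volume.restrict (ball xB R)) *
        volume (ball xB R) ^
          (-(δ / (n : ℝ)) + γ / (n : ℝ) - ∑ i, ((p i)⁻¹).toReal) *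
        ∏ i, (volume (ball xB R) ^ (-(((conjE (p i))⁻¹).toReal)) *
          lpOn (conjE (p i)) (fun y => (v i y)⁻¹) (ball xB R))
      ≤ ENNReal.ofReal C

/-- The reverse Hölder class `RH_s`. -/
def memRH {n : ℕ} (s : ℝ) (u : Rn n → ℝ≥0∞) : Prop :=
  ∃ C : ℝ, 0 < C ∧ ∀ (x : Rn n) (R : ℝ), 0 < R →
    ((volume (ball x R))⁻¹ * ∫⁻ y in ball x R, u y ^ s) ^ (1 / s) ≤
      ENNReal.ofReal C * ((volume (ball x R))⁻¹ * ∫⁻ y in ball x R, u y)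

/-- The reverse Hölder class `RH_∞`. -/
def memRHinf {n : ℕ} (u : Rn n → ℝ≥0∞) : Prop :=
  ∃ C : ℝ, 0 < C ∧ ∀ (x : Rn n) (R : ℝ), 0 < R →
    essSup u (volume.restrict (ball x R)) ≤
      ENNReal.ofReal C * ((volume (ball x R))⁻¹ * ∫⁻ y in ball x R, u y)

/-- Doubling condition for an `ℝ≥0∞`-valued weight. -/
def IsDoubling {n : ℕ} (u : Rn n → ℝ≥0∞) : Prop :=
  ∃ C : ℝ, 0 < C ∧ ∀ (x : Rn n) (R : ℝ), 0 < R →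
    ∫⁻ y in ball x (2 * R), u y ≤ ENNReal.ofReal C * ∫⁻ y in ball x R, u y

/-- The multilinear class `A_{p⃗,∞}`. -/
def ApInfty {n : ℕ} (m : ℕ) (p : Fin m → ℝ≥0∞) (v : Fin m → Rn n → ℝ≥0∞) : Prop :=
  ∃ C : ℝ, 0 < C ∧ ∀ (xB : Rn n) (R : ℝ), 0 < R →
    essSup (fun x => ∏ i, v i x) (volume.restrict (ball xB R)) *
        ∏ i, (volume (ball xB R) ^ (-(((conjE (p i))⁻¹).toReal)) *
          lpOn (conjE (p i)) (fun y => (v i y)⁻¹) (ball xB R))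
      ≤ ENNReal.ofReal C

/-- The kernel of the modified multilinear fractional operator `J_{γ,m}`. -/
def Jker {n : ℕ} (m : ℕ) (γ : ℝ) (x : Rn n) (y : Fin m → Rn n) : ℝ :=
  (∑ i, dist x (y i)) ^ (γ - (m : ℝ) * (n : ℝ)) -
    (if ∀ i, y i ∈ ball (0 : Rn n) 1 then 0
     else (∑ i, dist (0 : Rn n) (y i)) ^ (γ - (m : ℝ) * (n : ℝ)))

/-- The modified multilinear fractional operator `J_{γ,m}`. -/
def Jop {n m : ℕ} (γ : ℝ) (f : Fin m → Rn n → ℝ) (x : Rn n) : ℝ :=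
  ∫ y : Fin m → Rn n, Jker m γ x y * ∏ i, f i (y i)

/-- The vector `(1,…,1)` in `ℝⁿ`. -/
def uvec (n : ℕ) : Rn n := (EuclideanSpace.equiv (Fin n) ℝ).symm fun _ => 1

/-- The quadrant `A` associated to a ball with center `xB`. -/
def Aset {n : ℕ} (xB : Rn n) : Set (Rn n) := {y | ∀ i, xB i ≤ y i}

/-- The set `C₁` associated to a ball `B(xB,R)`. -/
def C1set {n : ℕ} (xB : Rn n) (R : ℝ) : Set (Rn n) :=
  ball (xB - (R / (12 * Real.sqrt n)) • uvec n) (R / (12 * Real.sqrt n)) ∩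
    {y | ∀ i, y i ≤ (xB - (R / (12 * Real.sqrt n)) • uvec n) i}

/-- The set `C₂` associated to a ball `B(xB,R)`. -/
def C2set {n : ℕ} (xB : Rn n) (R : ℝ) : Set (Rn n) :=
  ball (xB - (R / (3 * Real.sqrt n)) • uvec n) (2 * R / 3) ∩
    {y | ∀ i, y i ≤ (xB - (R / (3 * Real.sqrt n)) • uvec n) i}

theorem ENNReal.rpow_sum_of_ne_zero_of_ne_top {ι : Type*} {x : ℝ≥0∞} (hx : x ≠ 0) (hx' : x ≠ ∞)
    (s : Finset ι) (f : ι → ℝ) : x ^ (∑ i ∈ s, f i) = ∏ i ∈ s, x ^ f i := by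
  induction s using Finset.cons_induction with
  | empty => simp
  | cons i s hi ih => rw [Finset.sum_cons, Finset.prod_cons, ENNReal.rpow_add _ _ hx hx', ih]

theorem ENNReal.eq_of_forall_mul_rpow_le_mul_rpow {c₁ c₂ : ℝ≥0∞} {a b : ℝ} (hc₁ : c₁ ≠ 0)
    (hc₁' : c₁ ≠ ∞) (hc₂ : c₂ ≠ ∞)
    (h : ∀ t : ℝ≥0∞, t ≠ 0 → t ≠ ∞ → c₁ * t ^ a ≤ c₂ * t ^ b) : a = b := by
  by_contra hab
  have hd : a - b ≠ 0 := sub_ne_zero.2 hab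
  set T := (c₂ + 1) / c₁
  have hT0 : T ≠ 0 := ENNReal.div_pos (by simp) (by finiteness) |>.ne'
  have hTt : T ≠ ∞ := ENNReal.div_ne_top (by finiteness) hc₁
  set t := T ^ (a - b)⁻¹
  have ht0 : t ≠ 0 := by simp [t, hT0, hTt]
  have htt : t ≠ ∞ := by simp [t, hT0, hTt]
  have htb0 : t ^ b ≠ 0 := by simp [ht0, htt]
  have htbt : t ^ b ≠ ∞ := by simp [ht0, htt]
  have hsplit : c₁ * t ^ a = (c₂ + 1) * t ^ b := by
    rw [show a = (a - b) + b by ring, ENNReal.rpow_add _ _ ht0 htt, ENNReal.rpow_inv_rpow hd,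
      ← mul_assoc, ENNReal.mul_div_cancel hc₁ (by finiteness)]
  have := h t ht0 htt
  rw [hsplit, ENNReal.mul_le_mul_iff_left htb0 htbt] at this
  exact (ENNReal.lt_add_right hc₂ one_ne_zero).not_ge this

section Holder

variable {α : Type*} [MeasurableSpace α] {μ : Measure α}

theorem lintegral_prod_rpow_le_of_sum_le_one {ι : Type*} (s : Finset ι) {f : ι → α → ℝ≥0∞}
    (hf : ∀ i ∈ s, AEMeasurable (f i) μ) {a : ι → ℝ} (ha : ∀ i ∈ s, 0 ≤ a i)
    (hsum : ∑ i ∈ s, a i ≤ 1) :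
    ∫⁻ x, ∏ i ∈ s, f i x ^ a i ∂μ ≤
      μ univ ^ (1 - ∑ i ∈ s, a i) * ∏ i ∈ s, (∫⁻ x, f i x ∂μ) ^ a i := by
  simpa using ENNReal.lintegral_mul_prod_norm_pow_le s (g := fun _ => 1) aemeasurable_const hf
    (1 - ∑ i ∈ s, a i) (by ring) (by linarith) ha

/-- One form for both cases: `S = 1, G = f ^ q` if `q < ∞`, and `S = ‖f‖_∞, G = 1` if `q = ∞`. -/
theorem exists_ae_le_mul_rpow_and_eLpNorm_eq {f : α → ℝ≥0∞} (hf : AEMeasurable f μ)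
    {q : ℝ≥0∞} (hq : q ≠ 0) :
    ∃ (S : ℝ≥0∞) (G : α → ℝ≥0∞), AEMeasurable G μ ∧
      (∀ᵐ x ∂μ, f x ≤ S * G x ^ (q⁻¹).toReal) ∧
      S * (∫⁻ x, G x ∂μ) ^ (q⁻¹).toReal = eLpNorm f q μ := by
  by_cases hq_top : q = ∞
  · refine ⟨eLpNorm f ∞ μ, 1, aemeasurable_const, ?_, by simp [hq_top]⟩
    simpa [hq_top, eLpNorm_exponent_top] using ae_le_eLpNormEssSup (f := f) (μ := μ)
  have hq_pos : 0 < q.toReal := ENNReal.toReal_pos hq hq_top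
  refine ⟨1, fun x => f x ^ q.toReal, hf.pow_const _, .of_forall fun x => ?_, ?_⟩
  · rw [ENNReal.toReal_inv, one_mul, ← ENNReal.rpow_mul, mul_inv_cancel₀ hq_pos.ne',
      ENNReal.rpow_one]
  · simp [eLpNorm_eq_lintegral_rpow_enorm_toReal hq hq_top, ENNReal.toReal_inv]

theorem measure_univ_rpow_le_of_ae_one_le_mul_prod_rpow [IsFiniteMeasure μ] [NeZero μ]
    {ι : Type*} (s : Finset ι) {G : ι → α → ℝ≥0∞} (hG : ∀ i ∈ s, AEMeasurable (G i) μ)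
    {a : ι → ℝ} (ha : ∀ i ∈ s, 0 ≤ a i) (hsum : ∑ i ∈ s, a i ≤ 1) {c : ℝ≥0∞}
    (h : ∀ᵐ x ∂μ, 1 ≤ c * ∏ i ∈ s, G i x ^ a i) :
    μ univ ^ (∑ i ∈ s, a i) ≤ c * ∏ i ∈ s, (∫⁻ x, G i x ∂μ) ^ a i := by
  have hμ0 : μ univ ≠ 0 := Measure.measure_univ_ne_zero.2 (NeZero.ne μ)
  have hμt : μ univ ≠ ∞ := measure_ne_top μ univ
  set θ := 1 - ∑ i ∈ s, a i
  have hθ0 : μ univ ^ θ ≠ 0 := by simp [hμ0, hμt]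
  have hθt : μ univ ^ θ ≠ ∞ := by simp [hμ0, hμt]
  refine (ENNReal.mul_le_mul_iff_left hθ0 hθt).1 ?_
  calc μ univ ^ (∑ i ∈ s, a i) * μ univ ^ θ = μ univ := by
        rw [← ENNReal.rpow_add _ _ hμ0 hμt, add_sub_cancel, ENNReal.rpow_one]
    _ = ∫⁻ _, 1 ∂μ := lintegral_one.symm
    _ ≤ ∫⁻ x, c * ∏ i ∈ s, G i x ^ a i ∂μ := lintegral_mono_ae h
    _ = c * ∫⁻ x, ∏ i ∈ s, G i x ^ a i ∂μ :=
        lintegral_const_mul'' _ (s.aemeasurable_fun_prod fun i hi => (hG i hi).pow_const _)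
    _ ≤ c * (μ univ ^ θ * ∏ i ∈ s, (∫⁻ x, G i x ∂μ) ^ a i) := by
        gcongr; exact lintegral_prod_rpow_le_of_sum_le_one s hG ha hsum
    _ = _ := by ring

theorem measure_univ_rpow_le_essSup_prod_mul_prod_eLpNorm {ι : Type*} [Fintype ι]
    [IsFiniteMeasure μ] [NeZero μ] {v : ι → α → ℝ≥0∞} (hv : ∀ i, AEMeasurable (v i) μ)
    (hv_ne : ∀ i, ∀ᵐ x ∂μ, v i x ≠ 0 ∧ v i x ≠ ∞) {q : ι → ℝ≥0∞} (hq : ∀ i, q i ≠ 0) :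
    μ univ ^ (∑ i, ((q i)⁻¹).toReal) ≤
      essSup (fun x => ∏ i, v i x) μ * ∏ i, eLpNorm (fun x => (v i x)⁻¹) (q i) μ := by
  set r : ι → ℝ := fun i => ((q i)⁻¹).toReal
  set σ := ∑ i, r i
  set s := σ + 1
  have hr : ∀ i, 0 ≤ r i := fun _ => ENNReal.toReal_nonneg
  have hs : 0 < s := by have := Finset.sum_nonneg fun i (_ : i ∈ Finset.univ) => hr i; linarith
  choose S G hG hle hnorm using fun i =>
    exists_ae_le_mul_rpow_and_eLpNorm_eq (f := fun x => (v i x)⁻¹) (hv i).inv (hq i)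
  set W := essSup (fun x => ∏ i, v i x) μ
  set X := (W * ∏ i, S i) ^ s⁻¹
  -- The root `1 / s` brings the Hölder exponents `r i / s` to a sum below `1`.
  have hpt : ∀ᵐ x ∂μ, 1 ≤ X * ∏ i, G i x ^ (r i / s) := by
    filter_upwards [ENNReal.ae_le_essSup (fun x => ∏ i, v i x), ae_all_iff.2 hle,
      ae_all_iff.2 hv_ne] with x hW hle hne
    have h1 : 1 ≤ (W * ∏ i, S i) * ∏ i, G i x ^ r i := calc
      1 = (∏ i, v i x) * ∏ i, (v i x)⁻¹ := by
          rw [← Finset.prod_mul_distrib]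
          exact (Finset.prod_eq_one fun i _ => ENNReal.mul_inv_cancel (hne i).1 (hne i).2).symm
      _ ≤ W * ∏ i, (S i * G i x ^ r i) := by gcongr with i; exact hle i
      _ = _ := by rw [Finset.prod_mul_distrib, mul_assoc]
    calc 1 = 1 ^ s⁻¹ := (ENNReal.one_rpow _).symm
      _ ≤ ((W * ∏ i, S i) * ∏ i, G i x ^ r i) ^ s⁻¹ := by gcongr
      _ = X * ∏ i, G i x ^ (r i / s) := by
          rw [ENNReal.mul_rpow_of_nonneg _ _ (by positivity),
            ← ENNReal.prod_rpow_of_nonneg (by positivity)]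
          simp_rw [← ENNReal.rpow_mul, div_eq_mul_inv]
          rfl
  have hroot := measure_univ_rpow_le_of_ae_one_le_mul_prod_rpow Finset.univ (fun i _ => hG i)
    (fun i _ => by positivity) (by rw [← Finset.sum_div]; exact (div_le_one hs).2 (by linarith))
    hpt
  rw [← Finset.sum_div] at hroot
  calc μ univ ^ σ = (μ univ ^ (σ / s)) ^ s := by
        rw [← ENNReal.rpow_mul, div_mul_cancel₀ _ hs.ne']
    _ ≤ (X * ∏ i, (∫⁻ x, G i x ∂μ) ^ (r i / s)) ^ s := by gcongr
    _ = W * ∏ i, (S i * (∫⁻ x, G i x ∂μ) ^ r i) := by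
        rw [ENNReal.mul_rpow_of_nonneg _ _ hs.le, ← ENNReal.rpow_mul, inv_mul_cancel₀ hs.ne',
          ENNReal.rpow_one, ← ENNReal.prod_rpow_of_nonneg hs.le, Finset.prod_mul_distrib, mul_assoc]
        simp_rw [← ENNReal.rpow_mul, div_mul_cancel₀ _ hs.ne']
    _ = _ := congrArg (W * ·) (Finset.prod_congr rfl fun i _ => hnorm i)

end Holder

theorem ENNReal.one_lt_toReal_of_one_lt {p : ℝ≥0∞} (hp : 1 < p) (hp_top : p ≠ ∞) :
    1 < p.toReal := by
  simpa using (ENNReal.toReal_lt_toReal ENNReal.one_ne_top hp_top).2 hp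

theorem conjE_ne_zero {p : ℝ≥0∞} (hp : 1 ≤ p) : conjE p ≠ 0 := by
  rcases eq_or_ne p 1 with rfl | h1
  · simp [conjE]
  rcases eq_or_ne p ∞ with rfl | h_top
  · simp [conjE]
  have := ENNReal.one_lt_toReal_of_one_lt (hp.lt_of_ne' h1) h_top
  simp only [conjE, h1, h_top, if_false, ne_eq, ENNReal.ofReal_eq_zero, not_le]
  exact div_pos (by linarith) (by linarith)

theorem conjE_inv_toReal {p : ℝ≥0∞} (hp : 1 ≤ p) :
    ((conjE p)⁻¹).toReal = 1 - (p⁻¹).toReal := by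
  rcases eq_or_ne p 1 with rfl | h1
  · simp [conjE]
  rcases eq_or_ne p ∞ with rfl | h_top
  · simp [conjE]
  have := ENNReal.one_lt_toReal_of_one_lt (hp.lt_of_ne' h1) h_top
  simp only [conjE, h1, h_top, if_false, ENNReal.toReal_inv]
  rw [ENNReal.toReal_ofReal (div_nonneg (by linarith) (by linarith))]
  field_simp

theorem lpOn_univ_eq_eLpNorm {n : ℕ} {q : ℝ≥0∞} (hq : q ≠ 0) (g : Rn n → ℝ≥0∞) :
    lpOn q g univ = eLpNorm g q volume := by
  by_cases hq_top : q = ∞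
  · simp [lpOn, hq_top, eLpNorm_exponent_top, eLpNormEssSup]
  · simp [lpOn, hq_top, eLpNorm_eq_lintegral_rpow_enorm_toReal hq hq_top]

theorem volume_ball_eq_ofReal_rpow_mul {n : ℕ} (x : Rn n) {R : ℝ} (hR : 0 < R) :
    volume (ball x R) = ENNReal.ofReal R ^ (n : ℝ) * volume (ball (0 : Rn n) 1) := by
  rw [Measure.addHaar_ball_of_pos _ _ hR, finrank_euclideanSpace_fin, ENNReal.ofReal_pow hR.le,
    ENNReal.rpow_natCast]

theorem volume_ball_rpow_inv_eq {n : ℕ} (hn : n ≠ 0) (x : Rn n) {R : ℝ} (hR : 0 < R) :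
    volume (ball x R) ^ (n : ℝ)⁻¹ =
      volume (ball (0 : Rn n) 1) ^ (n : ℝ)⁻¹ * ENNReal.ofReal R := by
  rw [volume_ball_eq_ofReal_rpow_mul x hR, ENNReal.mul_rpow_of_nonneg _ _ (by positivity),
    ← ENNReal.rpow_mul, mul_inv_cancel₀ (by exact_mod_cast hn), ENNReal.rpow_one, mul_comm]

theorem volume_ball_rpow_inv_add_edist_le {n : ℕ} (hn : n ≠ 0) {x y : Rn n} {R : ℝ}
    (hy : y ∈ ball x R) :
    volume (ball x R) ^ (n : ℝ)⁻¹ + edist x y ≤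
      (volume (ball (0 : Rn n) 1) ^ (n : ℝ)⁻¹ + 1) * ENNReal.ofReal R := by
  have hR : 0 < R := dist_nonneg.trans_lt (mem_ball.1 hy)
  rw [volume_ball_rpow_inv_eq hn x hR, add_mul, one_mul, edist_dist, dist_comm]
  gcongr
  exact (mem_ball.1 hy).le

theorem eLpNorm_inv_restrict_ball_le_mul_hmFactor {n m : ℕ} (hn : n ≠ 0) {γi : ℝ}
    (hγi : γi ≤ n + 1 / m) {q : ℝ≥0∞} (hq : q ≠ 0) {vi : Rn n → ℝ≥0∞} (hvi : Measurable vi)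
    (xB : Rn n) (R : ℝ) :
    eLpNorm (fun y => (vi y)⁻¹) q (volume.restrict (ball xB R)) ≤
      ((volume (ball (0 : Rn n) 1) ^ (n : ℝ)⁻¹ + 1) * ENNReal.ofReal R) ^
          ((n : ℝ) - γi + 1 / m) * HmFactor m γi q vi xB R := by
  set β := (n : ℝ) - γi + 1 / m
  set X := (volume (ball (0 : Rn n) 1) ^ (n : ℝ)⁻¹ + 1) * ENNReal.ofReal R
  have hβ : 0 ≤ β := by simp only [β]; linarith
  rw [HmFactor, lpOn_univ_eq_eLpNorm hq]
  refine (eLpNorm_le_mul_eLpNorm_of_ae_le_mul'' q ?_ ?_).trans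
    (mul_le_mul_right (eLpNorm_mono_measure _ Measure.restrict_le_self) _)
  · exact (hvi.inv.mul ((measurable_const.add (measurable_const.edist measurable_id)).pow_const
      _)).aestronglyMeasurable
  filter_upwards [ae_restrict_mem measurableSet_ball] with y hy
  have hR : 0 < R := dist_nonneg.trans_lt (mem_ball.1 hy)
  have hX0 : X ≠ 0 := mul_ne_zero (by simp) (by simpa using hR)
  have hXt : X ≠ ∞ := by finiteness
  have hone : 1 ≤ X ^ β * ((volume (ball xB R) ^ (n : ℝ)⁻¹ + edist xB y) ^ β)⁻¹ := by
    rw [← div_eq_mul_inv, ENNReal.le_div_iff_mul_le (by simp [hX0, hXt]) (by simp [hX0, hXt]),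
      one_mul]
    exact ENNReal.rpow_le_rpow (volume_ball_rpow_inv_add_edist_le hn hy) hβ
  simp only [enorm_eq_self, ENNReal.rpow_neg]
  calc (vi y)⁻¹ = 1 * (vi y)⁻¹ := (one_mul _).symm
    _ ≤ X ^ β * ((volume (ball xB R) ^ (n : ℝ)⁻¹ + edist xB y) ^ β)⁻¹ * (vi y)⁻¹ := by gcongr
    _ = _ := by ring

theorem volume_ball_rpow_le_of_hm_le {n m : ℕ} (hn : n ≠ 0) {γv : Fin m → ℝ}
    (hγv : ∀ i, γv i ≤ n + 1 / m) {δ : ℝ} {p : Fin m → ℝ≥0∞} (hp : ∀ i, 1 ≤ p i)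
    {v : Fin m → Rn n → ℝ≥0∞} (hv : ∀ i, IsWeight (v i)) {C : ℝ≥0∞} (xB : Rn n) {R : ℝ}
    (hR : 0 < R)
    (hH : essSup (fun x => ∏ i, v i x) (volume.restrict (ball xB R)) *
        volume (ball xB R) ^ (-((δ - 1) / (n : ℝ))) *
        ∏ i, HmFactor m (γv i) (conjE (p i)) (v i) xB R ≤ C) :
    volume (ball xB R) ^ (-((δ - 1) / (n : ℝ)) + ∑ i, ((conjE (p i))⁻¹).toReal) ≤
      ((volume (ball (0 : Rn n) 1) ^ (n : ℝ)⁻¹ + 1) * ENNReal.ofReal R) ^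
          (∑ i, ((n : ℝ) - γv i + 1 / m)) * C := by
  set μ := volume.restrict (ball xB R)
  set X := (volume (ball (0 : Rn n) 1) ^ (n : ℝ)⁻¹ + 1) * ENNReal.ofReal R
  have hV0 : volume (ball xB R) ≠ 0 := (measure_ball_pos volume xB hR).ne'
  have hVt : volume (ball xB R) ≠ ∞ := measure_ball_lt_top.ne
  have hX0 : X ≠ 0 := mul_ne_zero (by simp) (by simpa using hR)
  have hXt : X ≠ ∞ := by finiteness
  have : IsFiniteMeasure μ := isFiniteMeasure_restrict.2 hVt
  have : NeZero μ := ⟨by simpa [μ, Measure.restrict_eq_zero] using hV0⟩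
  have hholder := measure_univ_rpow_le_essSup_prod_mul_prod_eLpNorm (μ := μ)
    (fun i => (hv i).1.aemeasurable)
    (fun i => ae_restrict_of_ae ((hv i).2.1.mono fun x hx => ⟨hx.1.ne', hx.2.ne⟩))
    (q := fun i => conjE (p i)) (fun i => conjE_ne_zero (hp i))
  rw [Measure.restrict_apply_univ] at hholder
  have hfactor (i : Fin m) := eLpNorm_inv_restrict_ball_le_mul_hmFactor hn (hγv i)
    (conjE_ne_zero (hp i)) (hv i).1 xB R
  calc volume (ball xB R) ^ (-((δ - 1) / (n : ℝ)) + ∑ i, ((conjE (p i))⁻¹).toReal)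
      = volume (ball xB R) ^ (-((δ - 1) / (n : ℝ))) *
          volume (ball xB R) ^ (∑ i, ((conjE (p i))⁻¹).toReal) :=
        ENNReal.rpow_add _ _ hV0 hVt
    _ ≤ volume (ball xB R) ^ (-((δ - 1) / (n : ℝ))) * (essSup (fun x => ∏ i, v i x) μ *
          ∏ i, (X ^ ((n : ℝ) - γv i + 1 / m) * HmFactor m (γv i) (conjE (p i)) (v i) xB R)) := by
        gcongr
        exact hholder.trans (by gcongr with i; exact hfactor i)
    _ = X ^ (∑ i, ((n : ℝ) - γv i + 1 / m)) * (essSup (fun x => ∏ i, v i x) μ *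
          volume (ball xB R) ^ (-((δ - 1) / (n : ℝ))) *
          ∏ i, HmFactor m (γv i) (conjE (p i)) (v i) xB R) := by
        rw [ENNReal.rpow_sum_of_ne_zero_of_ne_top hX0 hXt, Finset.prod_mul_distrib]
        ring
    _ ≤ X ^ (∑ i, ((n : ℝ) - γv i + 1 / m)) * C := by gcongr

theorem Hm.scaling_exponent_eq {n m : ℕ} (hn : n ≠ 0) {γv : Fin m → ℝ}
    (hγv : ∀ i, γv i ≤ n + 1 / m) {δ : ℝ} {p : Fin m → ℝ≥0∞} (hp : ∀ i, 1 ≤ p i)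
    {v : Fin m → Rn n → ℝ≥0∞} (hv : ∀ i, IsWeight (v i))
    (hH : Hm m γv δ p (fun x => ∏ i, v i x) v) :
    (n : ℝ) * (-((δ - 1) / n) + ∑ i, ((conjE (p i))⁻¹).toReal) =
      ∑ i, ((n : ℝ) - γv i + 1 / m) := by
  obtain ⟨C, -, hC⟩ := hH
  set e := -((δ - 1) / (n : ℝ)) + ∑ i, ((conjE (p i))⁻¹).toReal
  set B := ∑ i, ((n : ℝ) - γv i + 1 / m)
  set b := volume (ball (0 : Rn n) 1)
  have hb0 : b ≠ 0 := (measure_ball_pos _ _ one_pos).ne'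
  have hbt : b ≠ ∞ := measure_ball_lt_top.ne
  refine ENNReal.eq_of_forall_mul_rpow_le_mul_rpow (c₁ := b ^ e)
    (c₂ := (b ^ (n : ℝ)⁻¹ + 1) ^ B * ENNReal.ofReal C) (by simp [hb0, hbt]) (by simp [hb0, hbt])
    (by finiteness) fun t ht0 htt => ?_
  have hR : 0 < t.toReal := ENNReal.toReal_pos ht0 htt
  have := volume_ball_rpow_le_of_hm_le hn hγv hp hv 0 hR (hC 0 _ hR)
  rw [volume_ball_eq_ofReal_rpow_mul 0 hR, ENNReal.ofReal_toReal htt,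
    ENNReal.mul_rpow_of_ne_zero (by simp [ht0]) hb0, ← ENNReal.rpow_mul,
    ENNReal.mul_rpow_of_ne_zero (by simp) ht0] at this
  convert this using 1 <;> ring

theorem sum_conjE_inv_toReal {m : ℕ} {p : Fin m → ℝ≥0∞} (hp : ∀ i, 1 ≤ p i) :
    ∑ i, ((conjE (p i))⁻¹).toReal = m - ∑ i, ((p i)⁻¹).toReal := by
  simp [conjE_inv_toReal (hp _), Finset.sum_sub_distrib]

theorem statement5_general {n m : ℕ} (hn : 1 ≤ n) (hm : 1 ≤ m) (γ : ℝ)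
    (γv : Fin m → ℝ) (hγv : ∀ i, 0 < γv i ∧ γv i < n)
    (hγsum : ∑ i, γv i = γ) (δ : ℝ) (p : Fin m → ℝ≥0∞) (hp : ∀ i, 1 ≤ p i)
    (v : Fin m → Rn n → ℝ≥0∞) (hv : ∀ i, IsWeight (v i))
    (hH : Hm m γv δ p (fun x => ∏ i, v i x) v) :
    δ = γ - n * ∑ i, ((p i)⁻¹).toReal := by
  have hn0 : (n : ℝ) ≠ 0 := Nat.cast_ne_zero.2 (by omega)
  have hm0 : (m : ℝ) ≠ 0 := Nat.cast_ne_zero.2 (by omega)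
  have hexp := hH.scaling_exponent_eq (by omega)
    (fun i => by linarith [(hγv i).2, (by positivity : (0 : ℝ) ≤ 1 / m)]) hp hv
  simp only [sum_conjE_inv_toReal hp, Finset.sum_add_distrib, Finset.sum_sub_distrib,
    Finset.sum_const, Finset.card_univ, Fintype.card_fin, nsmul_eq_mul, hγsum] at hexp
  field_simp at hexp
  linarith

/-- if `w = ∏ v_i` and `(w,v⃗) ∈ ℍ_m(p⃗,γ,δ)`, then `δ = γ - n/p`. -/
theorem statement5 {n m : ℕ} (hn : 1 ≤ n) (hm : 1 ≤ m) (γ : ℝ) (hγ0 : 0 < γ)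
    (hγ : γ < m * n) (γv : Fin m → ℝ) (hγv : ∀ i, 0 < γv i ∧ γv i < n)
    (hγsum : ∑ i, γv i = γ) (δ : ℝ) (p : Fin m → ℝ≥0∞) (hp : ∀ i, 1 ≤ p i)
    (v : Fin m → Rn n → ℝ≥0∞) (hv : ∀ i, IsWeight (v i))
    (hH : Hm m γv δ p (fun x => ∏ i, v i x) v) :
    δ = γ - n * ∑ i, ((p i)⁻¹).toReal :=
  statement5_general hn hm γ γv hγv hγsum δ p hp v hv hH
end
end

section
/- Let 0 < γ < mn, δ ∈ ℝ, p⃗ a vector of exponents, and (w,v⃗) a pair of weights such that v_i^{-1} ∈ RH_∞ for every i ∈ I_1 and v_i^{-p_i'} is doubling for every i ∈ I_2. Then (w,v⃗) ∈ ℍ_m(p⃗,γ,δ) if and only if (w,v⃗) satisfies the global condition. -/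
open MeasureTheory Metric Set
open scoped ENNReal NNReal BigOperators Classical

noncomputable section

/-!
Off a ball `B = B(x_B,R)` the kernels `(|B|^{1/n} + |x_B - y|)^{-α}` and `|x_B - y|^{-α}` are
comparable, which gives the passage from `ℍ_m(p⃗,γ,δ)` to the global condition at once.
Conversely, the `ℍ_m` factor splits into its part off `B`, bounded by the global factor, and its
part on `B`, at most `R^{-α}` times the size of `v_i^{-1}` on `B`. For `p_i > 1`, doubling moves
that mass onto a ball of radius `R/2` outside `B` and within distance `2R` of `x_B`. For `p_i = 1`,
`RH_∞` on a large dilate `tB` lets the supremum over `B` be absorbed by the supremum over the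
annulus `tB \ B`; this needs the supremum over `B` to be finite, which the global condition at a
translated ball provides.
-/

lemma ENNReal.rpow_neg_le_rpow_neg {x y : ℝ≥0∞} {e : ℝ} (he : 0 ≤ e) (h : x ≤ y) :
    y ^ (-e) ≤ x ^ (-e) := by
  rw [ENNReal.rpow_neg, ENNReal.rpow_neg]
  exact ENNReal.inv_le_inv' (ENNReal.rpow_le_rpow h he)

lemma ENNReal.rpow_mul_rpow_neg {x : ℝ≥0∞} (h0 : x ≠ 0) (ht : x ≠ ⊤) (e : ℝ) :
    x ^ e * x ^ (-e) = 1 := by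
  rw [← ENNReal.rpow_add e (-e) h0 ht, add_neg_cancel, ENNReal.rpow_zero]

lemma ENNReal.le_rpow_mul_mul_rpow_neg (u : ℝ≥0∞) {d ρ : ℝ≥0∞} {e : ℝ} (hd0 : d ≠ 0)
    (hdt : d ≠ ⊤) (hdρ : d ≤ ρ) (he : 0 ≤ e) : u ≤ ρ ^ e * (u * d ^ (-e)) :=
  calc u = d ^ e * d ^ (-e) * u := by rw [ENNReal.rpow_mul_rpow_neg hd0 hdt, one_mul]
    _ ≤ ρ ^ e * d ^ (-e) * u := by gcongr
    _ = ρ ^ e * (u * d ^ (-e)) := by ring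

lemma ENNReal.le_two_mul_of_le_half_add {a b : ℝ≥0∞} (ha : a ≠ ⊤) (h : a ≤ a / 2 + b) :
    a ≤ 2 * b := by
  have hhalf : a / 2 ≤ b := by
    rw [← ENNReal.sub_half ha]
    exact tsub_le_iff_left.mpr h
  calc a = 2 * (a / 2) := (ENNReal.mul_div_cancel two_ne_zero ENNReal.ofNat_ne_top).symm
    _ ≤ 2 * b := by gcongr

section LpOn

variable {n : ℕ} {q : ℝ≥0∞} {f g : Rn n → ℝ≥0∞} {s t : Set (Rn n)}

lemma lpOn_top (g : Rn n → ℝ≥0∞) (s : Set (Rn n)) :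
    lpOn ⊤ g s = essSup g (volume.restrict s) := if_pos rfl

lemma lpOn_of_ne_top (hq : q ≠ ⊤) (g : Rn n → ℝ≥0∞) (s : Set (Rn n)) :
    lpOn q g s = (∫⁻ y in s, g y ^ q.toReal) ^ (1 / q.toReal) := if_neg hq

lemma lpOn_mono_set (h : s ⊆ t) : lpOn q g s ≤ lpOn q g t := by
  unfold lpOn
  split_ifs
  · exact essSup_mono_measure' (Measure.restrict_mono h le_rfl)
  · exact ENNReal.rpow_le_rpow (lintegral_mono_set h) (by positivity)

lemma lpOn_mono_ae (h : ∀ᵐ y ∂volume.restrict s, f y ≤ g y) : lpOn q f s ≤ lpOn q g s := by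
  unfold lpOn
  split_ifs
  · exact essSup_mono_ae h
  · refine ENNReal.rpow_le_rpow (lintegral_mono_ae ?_) (by positivity)
    filter_upwards [h] with y hy
    exact ENNReal.rpow_le_rpow hy ENNReal.toReal_nonneg

lemma lpOn_const_mul (hq : q ≠ 0) {K : ℝ≥0∞} (hK : K ≠ ⊤) (g : Rn n → ℝ≥0∞)
    (s : Set (Rn n)) : lpOn q (fun y => K * g y) s = K * lpOn q g s := by
  by_cases ht : q = ⊤
  · subst ht
    simp only [lpOn_top]
    exact ENNReal.essSup_const_mul
  · have hr : 0 < q.toReal := ENNReal.toReal_pos hq ht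
    simp only [lpOn_of_ne_top ht, ENNReal.mul_rpow_of_nonneg _ _ hr.le]
    rw [lintegral_const_mul' _ _ (ENNReal.rpow_ne_top_of_nonneg hr.le hK),
      ENNReal.mul_rpow_of_nonneg _ _ (by positivity), ← ENNReal.rpow_mul,
      mul_one_div_cancel hr.ne', ENNReal.rpow_one]

lemma lpOn_univ_le_add_compl (hq : 1 ≤ q) (g : Rn n → ℝ≥0∞) (hs : MeasurableSet s) :
    lpOn q g univ ≤ lpOn q g s + lpOn q g sᶜ := by
  by_cases ht : q = ⊤
  · subst ht
    simp only [lpOn_top, Measure.restrict_univ]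
    refine essSup_le_of_ae_le _ ?_
    filter_upwards [(ae_restrict_iff' hs).mp (ENNReal.ae_le_essSup g),
      (ae_restrict_iff' hs.compl).mp (ENNReal.ae_le_essSup g)] with y hin hout
    by_cases hy : y ∈ s
    · exact (hin hy).trans le_self_add
    · exact (hout hy).trans le_add_self
  · have hr : 0 < 1 / q.toReal := by
      have := ENNReal.toReal_pos (zero_lt_one.trans_le hq).ne' ht
      positivity
    have hr1 : 1 / q.toReal ≤ 1 := by
      rw [div_le_one₀ (ENNReal.toReal_pos (zero_lt_one.trans_le hq).ne' ht)]
      simpa using ENNReal.toReal_mono ht hq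
    simp only [lpOn_of_ne_top ht, setLIntegral_univ]
    rw [← lintegral_add_compl _ hs]
    exact ENNReal.rpow_add_le_add_rpow _ _ hr.le hr1

lemma lpOn_ne_zero (hq : q ≠ 0) (hg : Measurable g) (hs : volume s ≠ 0)
    (hpos : ∀ᵐ y ∂volume.restrict s, g y ≠ 0) : lpOn q g s ≠ 0 := by
  have hnot : ∀ f : Rn n → ℝ≥0∞, (∀ᵐ y ∂volume.restrict s, f y ≠ 0) →
      ¬ f =ᵐ[volume.restrict s] 0 := fun f hf h0 => by
    have hfalse : ∀ᵐ _ ∂volume.restrict s, False := (hf.and h0).mono fun _ h => h.1 h.2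
    rw [Filter.eventually_false_iff_eq_bot, ae_eq_bot, Measure.restrict_eq_zero] at hfalse
    exact hs hfalse
  by_cases ht : q = ⊤
  · subst ht
    rw [lpOn_top, Ne, ENNReal.essSup_eq_zero_iff]
    exact hnot g hpos
  · have hr : 0 < q.toReal := ENNReal.toReal_pos hq ht
    rw [lpOn_of_ne_top ht]
    refine (ENNReal.rpow_pos_of_nonneg (pos_iff_ne_zero.mpr ?_) (by positivity)).ne'
    rw [Ne, lintegral_eq_zero_iff (by fun_prop)]
    refine hnot _ ?_
    filter_upwards [hpos] with y hy
    exact (ENNReal.rpow_pos_of_nonneg (pos_iff_ne_zero.mpr hy) hr.le).ne'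

end LpOn

lemma conjE_one : conjE 1 = ⊤ := by simp [conjE]

lemma conjE_ne_top {q : ℝ≥0∞} (hq : q ≠ 1) : conjE q ≠ ⊤ := by
  rw [conjE, if_neg hq]
  split_ifs <;> simp

lemma one_le_conjE {q : ℝ≥0∞} (hq : 1 ≤ q) : 1 ≤ conjE q := by
  unfold conjE
  split_ifs with h1 ht
  · exact le_top
  · exact le_rfl
  · have hlt : 1 < q.toReal := by
      simpa using (ENNReal.toReal_lt_toReal ENNReal.one_ne_top ht).mpr
        (lt_of_le_of_ne hq (Ne.symm h1))
    rw [ENNReal.one_le_ofReal, one_le_div (by linarith)]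
    linarith

lemma conjE_ne_zero_s6 {q : ℝ≥0∞} (hq : 1 ≤ q) : conjE q ≠ 0 :=
  (zero_lt_one.trans_le (one_le_conjE hq)).ne'

section Balls

variable {n : ℕ}

def unitBallVolumeRoot (n : ℕ) : ℝ≥0∞ := volume (ball (0 : Rn n) 1) ^ (n : ℝ)⁻¹

lemma unitBallVolumeRoot_ne_zero (n : ℕ) : unitBallVolumeRoot n ≠ 0 :=
  (ENNReal.rpow_pos (measure_ball_pos _ _ one_pos) measure_ball_lt_top.ne).ne'

lemma unitBallVolumeRoot_ne_top (n : ℕ) : unitBallVolumeRoot n ≠ ⊤ :=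
  ENNReal.rpow_ne_top_of_nonneg (by positivity) measure_ball_lt_top.ne

lemma volume_ball_rpow_inv (hn : 0 < n) (x : Rn n) {R : ℝ} (hR : 0 < R) :
    volume (ball x R) ^ (n : ℝ)⁻¹ = ENNReal.ofReal R * unitBallVolumeRoot n := by
  rw [Measure.addHaar_ball_of_pos _ x hR, finrank_euclideanSpace_fin,
    ENNReal.mul_rpow_of_nonneg _ _ (by positivity), ENNReal.ofReal_rpow_of_pos (by positivity),
    ← Real.rpow_natCast, ← Real.rpow_mul hR.le, mul_inv_cancel₀ (by positivity),
    Real.rpow_one, unitBallVolumeRoot]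

lemma volume_ball_mul (x : Rn n) {t : ℝ} (ht : 0 < t) (R : ℝ) :
    volume (ball x (t * R)) = ENNReal.ofReal (t ^ n) * volume (ball x R) := by
  rw [Measure.addHaar_ball_mul_of_pos _ x ht, finrank_euclideanSpace_fin,
    Measure.addHaar_ball_center _ x R]

lemma Rn.nontrivial (hn : 0 < n) : Nontrivial (Rn n) :=
  have : NeZero n := ⟨hn.ne'⟩
  inferInstance

lemma Rn.exists_dist_eq (hn : 0 < n) (x : Rn n) {r : ℝ} (hr : 0 ≤ r) : ∃ z, dist x z = r := by
  have := Rn.nontrivial hn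
  obtain ⟨e, he⟩ := exists_norm_eq (Rn n) hr
  exact ⟨x + e, by rw [dist_self_add_right, he]⟩

lemma volume_compl_ball_ne_zero (hn : 0 < n) (x : Rn n) (R : ℝ) :
    volume (ball x R)ᶜ ≠ 0 := by
  have := Rn.nontrivial hn
  rw [measure_compl measurableSet_ball measure_ball_lt_top.ne,
    measure_univ_of_isAddLeftInvariant, ENNReal.top_sub measure_ball_lt_top.ne]
  exact ENNReal.top_ne_zero

end Balls

section Kernels

variable {n : ℕ} {q : ℝ≥0∞} {α : ℝ}

lemma edist_rpow_neg_le_of_notMem_ball (hn : 0 < n) (hα : 0 ≤ α) {x y : Rn n} {R : ℝ}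
    (hR : 0 < R) (hy : y ∉ ball x R) :
    edist x y ^ (-α) ≤ (unitBallVolumeRoot n + 1) ^ α *
      (volume (ball x R) ^ (n : ℝ)⁻¹ + edist x y) ^ (-α) := by
  set κ := unitBallVolumeRoot n
  have hκ1 : κ + 1 ≠ ⊤ := ENNReal.add_ne_top.mpr ⟨unitBallVolumeRoot_ne_top n, ENNReal.one_ne_top⟩
  have hRd : ENNReal.ofReal R ≤ edist x y := by
    rw [edist_dist, dist_comm]
    exact ENNReal.ofReal_le_ofReal (not_lt.mp hy)
  have hsum : volume (ball x R) ^ (n : ℝ)⁻¹ + edist x y ≤ edist x y * (κ + 1) :=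
    calc volume (ball x R) ^ (n : ℝ)⁻¹ + edist x y = ENNReal.ofReal R * κ + edist x y := by
          rw [volume_ball_rpow_inv hn x hR]
      _ ≤ edist x y * κ + edist x y := by gcongr
      _ = edist x y * (κ + 1) := by ring
  calc edist x y ^ (-α) = (κ + 1) ^ α * (edist x y * (κ + 1)) ^ (-α) := by
        rw [ENNReal.mul_rpow_of_ne_top (edist_ne_top x y) hκ1, mul_left_comm,
          ENNReal.rpow_mul_rpow_neg (by simp) hκ1, mul_one]
    _ ≤ (κ + 1) ^ α * (volume (ball x R) ^ (n : ℝ)⁻¹ + edist x y) ^ (-α) := by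
        gcongr (κ + 1) ^ α * ?_
        exact ENNReal.rpow_neg_le_rpow_neg hα hsum

lemma lpOn_compl_ball_le (hn : 0 < n) (hα : 0 ≤ α) (hq : q ≠ 0) (u : Rn n → ℝ≥0∞)
    (x : Rn n) {R : ℝ} (hR : 0 < R) :
    lpOn q (fun y => u y * edist x y ^ (-α)) (ball x R)ᶜ ≤ (unitBallVolumeRoot n + 1) ^ α *
      lpOn q (fun y => u y * (volume (ball x R) ^ (n : ℝ)⁻¹ + edist x y) ^ (-α)) univ := by
  have hK : (unitBallVolumeRoot n + 1) ^ α ≠ ⊤ := ENNReal.rpow_ne_top_of_nonneg hα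
    (ENNReal.add_ne_top.mpr ⟨unitBallVolumeRoot_ne_top n, ENNReal.one_ne_top⟩)
  rw [← lpOn_const_mul hq hK]
  refine (lpOn_mono_ae ((ae_restrict_iff' measurableSet_ball.compl).mpr
    (ae_of_all _ fun y hy => ?_))).trans (lpOn_mono_set (subset_univ _))
  calc u y * edist x y ^ (-α)
      ≤ u y * ((unitBallVolumeRoot n + 1) ^ α *
          (volume (ball x R) ^ (n : ℝ)⁻¹ + edist x y) ^ (-α)) := by
        gcongr
        exact edist_rpow_neg_le_of_notMem_ball hn hα hR hy
    _ = _ := by ring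

lemma lpOn_le_rpow_mul_lpOn_edist (hq : q ≠ 0) (hα : 0 ≤ α) (u : Rn n → ℝ≥0∞) {x : Rn n}
    {ρ : ℝ≥0∞} (hρ : ρ ≠ ⊤) {s t : Set (Rn n)} (hs : MeasurableSet s) (hst : s ⊆ t)
    (hd : ∀ y ∈ s, edist x y ≠ 0 ∧ edist x y ≤ ρ) :
    lpOn q u s ≤ ρ ^ α * lpOn q (fun y => u y * edist x y ^ (-α)) t := by
  rw [← lpOn_const_mul hq (ENNReal.rpow_ne_top_of_nonneg hα hρ)]
  refine (lpOn_mono_ae ((ae_restrict_iff' hs).mpr (ae_of_all _ fun y hy => ?_))).trans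
    (lpOn_mono_set hst)
  exact ENNReal.le_rpow_mul_mul_rpow_neg _ (hd y hy).1 (edist_ne_top x y) (hd y hy).2 hα

end Kernels

lemma setLIntegral_ball_two_pow_mul_le {X : Type*} [PseudoMetricSpace X] [MeasurableSpace X]
    {μ : Measure X} {f : X → ℝ≥0∞} {C : ℝ}
    (hC : ∀ (x : X) (R : ℝ), 0 < R →
      ∫⁻ y in ball x (2 * R), f y ∂μ ≤ ENNReal.ofReal C * ∫⁻ y in ball x R, f y ∂μ)
    (x : X) {R : ℝ} (hR : 0 < R) (k : ℕ) :
    ∫⁻ y in ball x (2 ^ k * R), f y ∂μ ≤ ENNReal.ofReal C ^ k * ∫⁻ y in ball x R, f y ∂μ := by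
  induction k with
  | zero => simp
  | succ k ih =>
    calc ∫⁻ y in ball x (2 ^ (k + 1) * R), f y ∂μ
        = ∫⁻ y in ball x (2 * (2 ^ k * R)), f y ∂μ := by rw [pow_succ']; ring_nf
      _ ≤ ENNReal.ofReal C * ∫⁻ y in ball x (2 ^ k * R), f y ∂μ := hC x _ (by positivity)
      _ ≤ ENNReal.ofReal C * (ENNReal.ofReal C ^ k * ∫⁻ y in ball x R, f y ∂μ) := by gcongr
      _ = ENNReal.ofReal C ^ (k + 1) * ∫⁻ y in ball x R, f y ∂μ := by ring

lemma setLIntegral_le_essSup_mul {X : Type*} [MeasurableSpace X] (μ : Measure X)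
    (f : X → ℝ≥0∞) (s : Set X) : ∫⁻ y in s, f y ∂μ ≤ essSup f (μ.restrict s) * μ s :=
  calc ∫⁻ y in s, f y ∂μ ≤ ∫⁻ _ in s, essSup f (μ.restrict s) ∂μ :=
        lintegral_mono_ae (ENNReal.ae_le_essSup f)
    _ = essSup f (μ.restrict s) * μ s := setLIntegral_const _ _

section TailControl

variable {n : ℕ} {q : ℝ≥0∞} {α : ℝ}

-- What `RH_∞` (for `p_i = 1`) and doubling (for `p_i > 1`) each provide: it lets the part of an
-- `ℍ_m` factor over the ball be absorbed by the global factor.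
def TailControl (q : ℝ≥0∞) (α : ℝ) (u : Rn n → ℝ≥0∞) : Prop :=
  ∃ D : ℝ≥0∞, D ≠ ⊤ ∧ ∀ (x : Rn n) (R : ℝ), 0 < R →
    lpOn q u (ball x R) ≤
      D * ENNReal.ofReal R ^ α * lpOn q (fun y => u y * edist x y ^ (-α)) (ball x R)ᶜ

-- Three doublings carry the mass of `B(x,R)` onto the ball `B(z,R/2)`, which lies outside
-- `B(x,R)` and within distance `2R` of `x`.
lemma IsDoubling.tailControl (hn : 0 < n) (hq0 : q ≠ 0) (hq : q ≠ ⊤) (hα : 0 ≤ α)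
    {u : Rn n → ℝ≥0∞} (hdbl : IsDoubling fun y => u y ^ q.toReal) : TailControl q α u := by
  obtain ⟨C, -, hC⟩ := hdbl
  set r := q.toReal
  have hr : 0 < r := ENNReal.toReal_pos hq0 hq
  refine ⟨(ENNReal.ofReal C ^ 3) ^ (1 / r) * 2 ^ α,
    ENNReal.mul_ne_top (ENNReal.rpow_ne_top_of_nonneg (by positivity) (by simp))
      (ENNReal.rpow_ne_top_of_nonneg hα (by simp)), fun x R hR => ?_⟩
  obtain ⟨z, hz⟩ := Rn.exists_dist_eq hn x (by positivity : 0 ≤ 3 * R / 2)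
  have hmass : ∫⁻ y in ball x R, u y ^ r ≤ ENNReal.ofReal C ^ 3 * ∫⁻ y in ball z (R / 2), u y ^ r :=
    calc ∫⁻ y in ball x R, u y ^ r ≤ ∫⁻ y in ball z (2 ^ 3 * (R / 2)), u y ^ r := by
          refine lintegral_mono_set fun y hy => ?_
          rw [mem_ball] at hy ⊢
          linarith [dist_triangle y x z, dist_comm x z]
      _ ≤ _ := setLIntegral_ball_two_pow_mul_le hC z (by positivity) 3
  have hnear : ∀ y ∈ ball z (R / 2), edist x y ≠ 0 ∧ edist x y ≤ ENNReal.ofReal (2 * R) := by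
    intro y hy
    rw [mem_ball] at hy
    rw [edist_dist, Ne, ENNReal.ofReal_eq_zero, not_le]
    constructor
    · linarith [dist_triangle x y z, dist_comm y z]
    · exact ENNReal.ofReal_le_ofReal (by linarith [dist_triangle x z y, dist_comm y z])
  calc lpOn q u (ball x R) ≤ (ENNReal.ofReal C ^ 3) ^ (1 / r) * lpOn q u (ball z (R / 2)) := by
        rw [lpOn_of_ne_top hq, lpOn_of_ne_top hq, ← ENNReal.mul_rpow_of_nonneg _ _ (by positivity)]
        exact ENNReal.rpow_le_rpow hmass (by positivity)
    _ ≤ (ENNReal.ofReal C ^ 3) ^ (1 / r) * (ENNReal.ofReal (2 * R) ^ α *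
          lpOn q (fun y => u y * edist x y ^ (-α)) (ball x R)ᶜ) := by
        gcongr
        refine lpOn_le_rpow_mul_lpOn_edist hq0 hα u ENNReal.ofReal_ne_top measurableSet_ball
          (fun y hy => ?_) hnear
        rw [mem_compl_iff, mem_ball, not_lt]
        rw [mem_ball] at hy
        linarith [dist_triangle x y z, dist_comm y x, dist_comm y z]
    _ = _ := by
        rw [ENNReal.ofReal_mul zero_le_two, ENNReal.mul_rpow_of_nonneg _ _ hα, ENNReal.ofReal_ofNat]
        ring

-- `RH_∞` on the dilate `B(x,tR)`, split into `B(x,R)` and the annulus; the choice of `t` makes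
-- the share of `B(x,R)` at most half of its supremum.
lemma essSup_ball_le_half_add {u : Rn n → ℝ≥0∞} {C₀ : ℝ}
    (hu : ∀ (x : Rn n) (R : ℝ), 0 < R → essSup u (volume.restrict (ball x R)) ≤
      ENNReal.ofReal C₀ * ((volume (ball x R))⁻¹ * ∫⁻ y in ball x R, u y))
    (x : Rn n) {R t : ℝ} (hR : 0 < R) (ht : 1 ≤ t) (htC : 2 * C₀ ≤ t ^ n) :
    essSup u (volume.restrict (ball x R)) ≤ essSup u (volume.restrict (ball x R)) / 2 +
      ENNReal.ofReal C₀ * essSup u (volume.restrict (ball x (t * R) \ ball x R)) := by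
  set a := essSup u (volume.restrict (ball x R))
  set b := essSup u (volume.restrict (ball x (t * R) \ ball x R))
  set V := volume (ball x R)
  set T := ENNReal.ofReal (t ^ n)
  have htR : 0 < t * R := by positivity
  have hsub : ball x R ⊆ ball x (t * R) := ball_subset_ball (by nlinarith)
  have hV0 : V ≠ 0 := (measure_ball_pos _ _ hR).ne'
  have hVt : V ≠ ⊤ := measure_ball_lt_top.ne
  have hT0 : T ≠ 0 := (ENNReal.ofReal_pos.mpr (by positivity)).ne'
  have hTV : volume (ball x (t * R)) = T * V := volume_ball_mul x (by positivity) R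
  have hTV0 : T * V ≠ 0 := mul_ne_zero hT0 hV0
  have hTVt : T * V ≠ ⊤ := ENNReal.mul_ne_top ENNReal.ofReal_ne_top hVt
  have hint : ∫⁻ y in ball x (t * R), u y ≤ a * V + b * (T * V) := by
    rw [← union_sdiff_cancel hsub,
      lintegral_union (measurableSet_ball.diff measurableSet_ball) disjoint_sdiff_right]
    exact add_le_add (setLIntegral_le_essSup_mul _ _ _) ((setLIntegral_le_essSup_mul _ _ _).trans
      (by rw [← hTV]; gcongr; exact sdiff_subset))
  have hratio : ENNReal.ofReal C₀ * T⁻¹ ≤ 2⁻¹ := by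
    rw [← ENNReal.ofReal_inv_of_pos (by positivity), ← ENNReal.ofReal_mul' (by positivity),
      ← ENNReal.ofReal_ofNat 2, ← ENNReal.ofReal_inv_of_pos two_pos]
    refine ENNReal.ofReal_le_ofReal ?_
    rw [← div_eq_mul_inv, div_le_iff₀ (by positivity)]
    linarith
  calc a ≤ essSup u (volume.restrict (ball x (t * R))) :=
        essSup_mono_measure' (Measure.restrict_mono hsub le_rfl)
    _ ≤ ENNReal.ofReal C₀ * ((T * V)⁻¹ * ∫⁻ y in ball x (t * R), u y) := hTV ▸ hu x _ htR
    _ ≤ ENNReal.ofReal C₀ * ((T * V)⁻¹ * (a * V + b * (T * V))) := by gcongr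
    _ = ENNReal.ofReal C₀ * T⁻¹ * a * (V * V⁻¹) +
          ENNReal.ofReal C₀ * b * ((T * V) * (T * V)⁻¹) := by
        rw [ENNReal.mul_inv (Or.inl hT0) (Or.inl ENNReal.ofReal_ne_top)]
        ring
    _ ≤ 2⁻¹ * a + ENNReal.ofReal C₀ * b := by
        rw [ENNReal.mul_inv_cancel hV0 hVt, ENNReal.mul_inv_cancel hTV0 hTVt, mul_one, mul_one]
        gcongr
    _ = a / 2 + ENNReal.ofReal C₀ * b := by rw [ENNReal.div_eq_inv_mul]

lemma memRHinf.tailControl (hn : 0 < n) (hα : 0 ≤ α) {u : Rn n → ℝ≥0∞} (hRH : memRHinf u)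
    (hfin : ∀ (x : Rn n) (R : ℝ), 0 < R → lpOn ⊤ u (ball x R) ≠ ⊤) : TailControl ⊤ α u := by
  obtain ⟨C₀, -, hu⟩ := hRH
  set t := max 1 (2 * C₀)
  have ht : 1 ≤ t := le_max_left _ _
  have htC : 2 * C₀ ≤ t ^ n := (le_max_right _ _).trans (le_self_pow₀ ht hn.ne')
  refine ⟨2 * ENNReal.ofReal C₀ * ENNReal.ofReal t ^ α,
    ENNReal.mul_ne_top (ENNReal.mul_ne_top ENNReal.ofNat_ne_top ENNReal.ofReal_ne_top)
      (ENNReal.rpow_ne_top_of_nonneg hα ENNReal.ofReal_ne_top),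
    fun x R hR => ?_⟩
  have hann : lpOn ⊤ u (ball x (t * R) \ ball x R) ≤ ENNReal.ofReal (t * R) ^ α *
      lpOn ⊤ (fun y => u y * edist x y ^ (-α)) (ball x R)ᶜ := by
    refine lpOn_le_rpow_mul_lpOn_edist ENNReal.top_ne_zero hα u ENNReal.ofReal_ne_top
      (measurableSet_ball.diff measurableSet_ball) (fun y hy => hy.2) fun y hy => ?_
    rw [mem_sdiff, mem_ball, mem_ball, not_lt, dist_comm] at hy
    rw [edist_dist, Ne, ENNReal.ofReal_eq_zero, not_le]
    exact ⟨hR.trans_le hy.2, ENNReal.ofReal_le_ofReal hy.1.le⟩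
  have hfinB := hfin x R hR
  simp only [lpOn_top] at hann hfinB ⊢
  calc essSup u (volume.restrict (ball x R))
      ≤ 2 * (ENNReal.ofReal C₀ * essSup u (volume.restrict (ball x (t * R) \ ball x R))) :=
        ENNReal.le_two_mul_of_le_half_add hfinB (essSup_ball_le_half_add hu x hR ht htC)
    _ ≤ 2 * (ENNReal.ofReal C₀ * (ENNReal.ofReal (t * R) ^ α *
          essSup (fun y => u y * edist x y ^ (-α)) (volume.restrict (ball x R)ᶜ))) := by gcongr
    _ = _ := by
        rw [ENNReal.ofReal_mul (by positivity), ENNReal.mul_rpow_of_nonneg _ _ hα]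
        ring

lemma TailControl.exists_lpOn_univ_le (hn : 0 < n) (hα : 0 ≤ α) (hq : 1 ≤ q)
    {u : Rn n → ℝ≥0∞} (h : TailControl q α u) :
    ∃ K : ℝ≥0∞, K ≠ ⊤ ∧ ∀ (x : Rn n) (R : ℝ), 0 < R →
      lpOn q (fun y => u y * (volume (ball x R) ^ (n : ℝ)⁻¹ + edist x y) ^ (-α)) univ ≤
        K * lpOn q (fun y => u y * edist x y ^ (-α)) (ball x R)ᶜ := by
  obtain ⟨D, hD, hloc⟩ := h
  set κ := unitBallVolumeRoot n
  have hκ : κ ^ (-α) ≠ ⊤ :=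
    ENNReal.rpow_ne_top_of_ne_zero (unitBallVolumeRoot_ne_zero n) (unitBallVolumeRoot_ne_top n)
  refine ⟨D * κ ^ (-α) + 1,
    ENNReal.add_ne_top.mpr ⟨ENNReal.mul_ne_top hD hκ, ENNReal.one_ne_top⟩, fun x R hR => ?_⟩
  set c := volume (ball x R) ^ (n : ℝ)⁻¹
  set G := lpOn q (fun y => u y * edist x y ^ (-α)) (ball x R)ᶜ
  have hc : c = ENNReal.ofReal R * κ := volume_ball_rpow_inv hn x hR
  have hR0 : ENNReal.ofReal R ≠ 0 := (ENNReal.ofReal_pos.mpr hR).ne'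
  have hc0 : c ^ (-α) ≠ ⊤ := by
    rw [hc]
    exact ENNReal.rpow_ne_top_of_ne_zero (mul_ne_zero hR0 (unitBallVolumeRoot_ne_zero n))
      (ENNReal.mul_ne_top ENNReal.ofReal_ne_top (unitBallVolumeRoot_ne_top n))
  have hnear : lpOn q (fun y => u y * (c + edist x y) ^ (-α)) (ball x R) ≤ D * κ ^ (-α) * G :=
    calc lpOn q (fun y => u y * (c + edist x y) ^ (-α)) (ball x R)
        ≤ lpOn q (fun y => c ^ (-α) * u y) (ball x R) := lpOn_mono_ae <| ae_of_all _ fun y => by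
          rw [mul_comm]
          gcongr ?_ * u y
          exact ENNReal.rpow_neg_le_rpow_neg hα le_self_add
      _ = c ^ (-α) * lpOn q u (ball x R) :=
          lpOn_const_mul (zero_lt_one.trans_le hq).ne' hc0 _ _
      _ ≤ c ^ (-α) * (D * ENNReal.ofReal R ^ α * G) := by gcongr; exact hloc x R hR
      _ = D * κ ^ (-α) * G * (ENNReal.ofReal R ^ α * ENNReal.ofReal R ^ (-α)) := by
          rw [hc, ENNReal.mul_rpow_of_ne_top ENNReal.ofReal_ne_top (unitBallVolumeRoot_ne_top n)]
          ring
      _ = D * κ ^ (-α) * G := by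
          rw [ENNReal.rpow_mul_rpow_neg hR0 ENNReal.ofReal_ne_top, mul_one]
  have hfar : lpOn q (fun y => u y * (c + edist x y) ^ (-α)) (ball x R)ᶜ ≤ G :=
    lpOn_mono_ae <| ae_of_all _ fun y => by
      gcongr u y * ?_
      exact ENNReal.rpow_neg_le_rpow_neg hα le_add_self
  calc lpOn q (fun y => u y * (c + edist x y) ^ (-α)) univ
      ≤ lpOn q (fun y => u y * (c + edist x y) ^ (-α)) (ball x R) +
          lpOn q (fun y => u y * (c + edist x y) ^ (-α)) (ball x R)ᶜ :=
        lpOn_univ_le_add_compl hq _ measurableSet_ball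
    _ ≤ D * κ ^ (-α) * G + G := add_le_add hnear hfar
    _ = (D * κ ^ (-α) + 1) * G := by ring

lemma lpOn_ball_ne_top_of_tail (hn : 0 < n) (hq : q ≠ 0) (hα : 0 ≤ α) {u : Rn n → ℝ≥0∞}
    (htail : ∀ (x : Rn n) (R : ℝ), 0 < R →
      lpOn q (fun y => u y * edist x y ^ (-α)) (ball x R)ᶜ ≠ ⊤)
    (x : Rn n) {R : ℝ} (hR : 0 < R) : lpOn q u (ball x R) ≠ ⊤ := by
  obtain ⟨x', hx'⟩ := Rn.exists_dist_eq hn x (by positivity : 0 ≤ 3 * R)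
  refine ne_top_of_le_ne_top (ENNReal.mul_ne_top
      (ENNReal.rpow_ne_top_of_nonneg hα ENNReal.ofReal_ne_top) (htail x' R hR))
    (lpOn_le_rpow_mul_lpOn_edist (ρ := ENNReal.ofReal (4 * R)) hq hα u ENNReal.ofReal_ne_top
      measurableSet_ball
      (fun y hy => ?_) fun y hy => ?_)
  · rw [mem_ball] at hy
    rw [mem_compl_iff, mem_ball, not_lt]
    linarith [dist_triangle x y x', dist_comm x y]
  · rw [mem_ball] at hy
    rw [edist_dist, Ne, ENNReal.ofReal_eq_zero, not_le]
    constructor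
    · linarith [dist_triangle x y x', dist_comm x y, dist_comm x' y]
    · exact ENNReal.ofReal_le_ofReal
        (by linarith [dist_triangle x' x y, dist_comm x x', dist_comm x y])

end TailControl

lemma ne_top_of_mul_prod_le {ι : Type*} [Fintype ι] {W : ℝ≥0∞} {F : ι → ℝ≥0∞} {C : ℝ}
    (hW : W ≠ 0) (hF : ∀ j, F j ≠ 0) (h : W * ∏ j, F j ≤ ENNReal.ofReal C) (i : ι) :
    F i ≠ ⊤ := by
  intro htop
  have hprod : ∏ j, F j = ⊤ := by
    rw [← Finset.mul_prod_erase Finset.univ F (Finset.mem_univ i), htop, ENNReal.top_mul]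
    exact Finset.prod_ne_zero_iff.mpr fun j _ => hF j
  rw [hprod, ENNReal.mul_top hW] at h
  exact ENNReal.ofReal_ne_top (top_le_iff.mp h)

lemma exists_mul_prod_le_of_le_mul {ι X Y : Type*} [Fintype ι] {P : X → Y → Prop}
    {W : X → Y → ℝ≥0∞} {F G : ι → X → Y → ℝ≥0∞} {K : ι → ℝ≥0∞} (hK : ∀ i, K i ≠ ⊤)
    (hFG : ∀ i x y, P x y → F i x y ≤ K i * G i x y)
    (h : ∃ C : ℝ, 0 < C ∧ ∀ x y, P x y → W x y * ∏ i, G i x y ≤ ENNReal.ofReal C) :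
    ∃ C : ℝ, 0 < C ∧ ∀ x y, P x y → W x y * ∏ i, F i x y ≤ ENNReal.ofReal C := by
  obtain ⟨C, hC, hWG⟩ := h
  have hM : ∏ i, K i ≠ ⊤ := ENNReal.prod_ne_top fun i _ => hK i
  refine ⟨(∏ i, K i).toReal * C + 1, by positivity, fun x y hxy => ?_⟩
  calc W x y * ∏ i, F i x y ≤ W x y * ∏ i, (K i * G i x y) := by
        gcongr with i
        exact hFG i x y hxy
    _ = (∏ i, K i) * (W x y * ∏ i, G i x y) := by rw [Finset.prod_mul_distrib]; ring
    _ ≤ (∏ i, K i) * ENNReal.ofReal C := by gcongr; exact hWG x y hxy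
    _ = ENNReal.ofReal ((∏ i, K i).toReal * C) := by
        rw [ENNReal.ofReal_mul ENNReal.toReal_nonneg, ENNReal.ofReal_toReal hM]
    _ ≤ ENNReal.ofReal ((∏ i, K i).toReal * C + 1) := ENNReal.ofReal_le_ofReal (by linarith)

section Weights

variable {n m : ℕ} {q : ℝ≥0∞} {α : ℝ}

lemma IsWeight.essSup_ball_ne_zero {w : Rn n → ℝ≥0∞} (hw : IsWeight w) (x : Rn n) {R : ℝ}
    (hR : 0 < R) : essSup w (volume.restrict (ball x R)) ≠ 0 := by
  simpa only [lpOn_top] using lpOn_ne_zero ENNReal.top_ne_zero hw.1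
    (measure_ball_pos _ x hR).ne' (ae_restrict_of_ae (hw.2.1.mono fun _ hy => hy.1.ne'))

lemma IsWeight.lpOn_inv_mul_edist_ne_zero (hn : 0 < n) (hq : q ≠ 0) {v : Rn n → ℝ≥0∞}
    (hv : IsWeight v) (x : Rn n) {R : ℝ} (hR : 0 < R) :
    lpOn q (fun y => (v y)⁻¹ * edist x y ^ (-α)) (ball x R)ᶜ ≠ 0 := by
  have hmeas : Measurable fun y => (v y)⁻¹ * edist x y ^ (-α) := by
    have := hv.1
    fun_prop
  refine lpOn_ne_zero hq hmeas (volume_compl_ball_ne_zero hn x R) ?_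
  filter_upwards [ae_restrict_of_ae hv.2.1, ae_restrict_mem measurableSet_ball.compl]
    with y hvy hy
  rw [mem_compl_iff, mem_ball, not_lt, dist_comm] at hy
  refine mul_ne_zero (ENNReal.inv_ne_zero.mpr hvy.2.ne) (ENNReal.rpow_pos ?_ (edist_ne_top x y)).ne'
  rw [edist_dist]
  exact ENNReal.ofReal_pos.mpr (hR.trans_le hy)

lemma GlobalCond.tail_ne_top (hn : 0 < n) {γv : Fin m → ℝ} {δ : ℝ} {p : Fin m → ℝ≥0∞}
    (hp : ∀ i, 1 ≤ p i) {w : Rn n → ℝ≥0∞} {v : Fin m → Rn n → ℝ≥0∞} (hw : IsWeight w)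
    (hv : ∀ i, IsWeight (v i)) (h : GlobalCond m γv δ p w v) (i : Fin m) (x : Rn n) {R : ℝ}
    (hR : 0 < R) :
    lpOn (conjE (p i)) (fun y => (v i y)⁻¹ * edist x y ^ (-((n : ℝ) - γv i + 1 / (m : ℝ))))
      (ball x R)ᶜ ≠ ⊤ := by
  obtain ⟨C, -, hC⟩ := h
  refine ne_top_of_mul_prod_le ?_
    (fun j => (hv j).lpOn_inv_mul_edist_ne_zero hn (conjE_ne_zero_s6 (hp j)) x hR) (hC x R hR) i
  exact mul_ne_zero (hw.essSup_ball_ne_zero x hR)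
    (ENNReal.rpow_pos (measure_ball_pos _ _ hR) measure_ball_lt_top.ne).ne'

end Weights

section Equivalence

variable {n m : ℕ} {γv : Fin m → ℝ} {δ : ℝ} {p : Fin m → ℝ≥0∞} {w : Rn n → ℝ≥0∞}
  {v : Fin m → Rn n → ℝ≥0∞}

lemma globalCond_of_hm (hn : 0 < n) (hα : ∀ i, 0 ≤ (n : ℝ) - γv i + 1 / (m : ℝ))
    (hp : ∀ i, 1 ≤ p i) (h : Hm m γv δ p w v) : GlobalCond m γv δ p w v :=
  exists_mul_prod_le_of_le_mul
    (fun i => ENNReal.rpow_ne_top_of_nonneg (hα i)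
      (ENNReal.add_ne_top.mpr ⟨unitBallVolumeRoot_ne_top n, ENNReal.one_ne_top⟩))
    (fun i x _ hR => lpOn_compl_ball_le hn (hα i) (conjE_ne_zero_s6 (hp i)) _ x hR) h

lemma hm_of_globalCond (hn : 0 < n) (hα : ∀ i, 0 ≤ (n : ℝ) - γv i + 1 / (m : ℝ))
    (hp : ∀ i, 1 ≤ p i) (hw : IsWeight w) (hv : ∀ i, IsWeight (v i))
    (hRHinf : ∀ i, p i = 1 → memRHinf fun y => (v i y)⁻¹)
    (hdbl : ∀ i, p i ≠ 1 → IsDoubling fun y => (v i y)⁻¹ ^ (conjE (p i)).toReal)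
    (h : GlobalCond m γv δ p w v) : Hm m γv δ p w v := by
  have hctrl : ∀ i, TailControl (conjE (p i)) ((n : ℝ) - γv i + 1 / (m : ℝ))
      fun y => (v i y)⁻¹ := by
    intro i
    by_cases hp1 : p i = 1
    · have hfin := lpOn_ball_ne_top_of_tail hn (conjE_ne_zero_s6 (hp i)) (hα i)
        fun x R hR => h.tail_ne_top hn hp hw hv i x hR
      rw [hp1, conjE_one] at hfin ⊢
      exact (hRHinf i hp1).tailControl hn (hα i) hfin
    · exact (hdbl i hp1).tailControl hn (conjE_ne_zero_s6 (hp i)) (conjE_ne_top hp1) (hα i)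
  choose K hK hFG using fun i => (hctrl i).exists_lpOn_univ_le hn (hα i) (one_le_conjE (hp i))
  exact exists_mul_prod_le_of_le_mul hK hFG h

end Equivalence

theorem statement6_general {n m : ℕ} (hn : 1 ≤ n) (γv : Fin m → ℝ) (hγv : ∀ i, 0 < γv i ∧ γv i < n)
    (δ : ℝ) (p : Fin m → ℝ≥0∞) (hp : ∀ i, 1 ≤ p i)
    (w : Rn n → ℝ≥0∞) (v : Fin m → Rn n → ℝ≥0∞) (hw : IsWeight w)
    (hv : ∀ i, IsWeight (v i))
    (hRHinf : ∀ i, p i = 1 → memRHinf fun y => (v i y)⁻¹)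
    (hdbl : ∀ i, p i ≠ 1 → IsDoubling fun y => (v i y)⁻¹ ^ (conjE (p i)).toReal) :
    Hm m γv δ p w v ↔ GlobalCond m γv δ p w v := by
  have hα : ∀ i, 0 ≤ (n : ℝ) - γv i + 1 / (m : ℝ) := fun i => by
    have := (hγv i).2
    positivity
  exact ⟨globalCond_of_hm hn hα hp, hm_of_globalCond hn hα hp hw hv hRHinf hdbl⟩

/-- under `RH_∞` on `v_i⁻¹` for `i ∈ I₁` and doubling of
`v_i^{-p_i'}` for `i ∈ I₂`, the condition `ℍ_m(p⃗,γ,δ)` is equivalent to the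
global condition. -/
theorem statement6 {n m : ℕ} (hn : 1 ≤ n) (hm : 1 ≤ m) (γ : ℝ) (hγ0 : 0 < γ)
    (hγ : γ < m * n) (γv : Fin m → ℝ) (hγv : ∀ i, 0 < γv i ∧ γv i < n)
    (hγsum : ∑ i, γv i = γ) (δ : ℝ) (p : Fin m → ℝ≥0∞) (hp : ∀ i, 1 ≤ p i)
    (w : Rn n → ℝ≥0∞) (v : Fin m → Rn n → ℝ≥0∞) (hw : IsWeight w)
    (hv : ∀ i, IsWeight (v i))
    (hRHinf : ∀ i, p i = 1 → memRHinf fun y => (v i y)⁻¹)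
    (hdbl : ∀ i, p i ≠ 1 → IsDoubling fun y => (v i y)⁻¹ ^ (conjE (p i)).toReal) :
    Hm m γv δ p w v ↔ GlobalCond m γv δ p w v :=
  statement6_general hn γv hγv δ p hp w v hw hv hRHinf hdbl
end
end

section
/- Let n, m ≥ 1 and 0 < γ < mn. There exists a positive constant C = C(n) such that for every ball B = B(x_B,R) in ℝ^n, every x ∈ C_1, every z ∈ C_2, and all y_1,…,y_m ∈ A, one has (Σ_{j=1}^m |x-y_j|)^{-(mn-γ)} - (Σ_{j=1}^m |z-y_j|)^{-(mn-γ)} ≥ C·|B|^{1/n}·(|B|^{1/n} + Σ_{j=1}^m |x_B-y_j|)^{-(mn-γ+1)}, where A, C_1, C_2 are the sets associated to B defined in the context. -/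
open MeasureTheory Metric Set
open scoped ENNReal NNReal BigOperators Classical

noncomputable section

/- The kernel difference is bounded below by the tangent line of `t ↦ t ^ (-β)`, evaluated at the
larger of the two sums.  On the sets `C₁`, `C₂`, `A` every coordinate of `y - z` exceeds the
corresponding coordinate of `y - x ≥ 0` by at least `R / (6√n)`, so `|z - y| ≥ |x - y| + R / (6√n)`;
and `|z - y| ≤ R + |x_B - y|`, while `|B| ^ (1/n)` is a fixed multiple of `R`. -/

open Real

lemma rpow_neg_sub_rpow_neg_ge {β a b : ℝ} (hβ : 0 ≤ β) (ha : 0 < a) (hab : a ≤ b) :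
    β * b ^ (-(β + 1)) * (b - a) ≤ a ^ (-β) - b ^ (-β) := by
  have hb : 0 < b := ha.trans_le hab
  set t := a / b
  have ht : 0 < t := div_pos ha hb
  have htangent : 1 + β * (1 - t) ≤ t ^ (-β) := by
    rw [rpow_def_of_pos ht]
    calc 1 + β * (1 - t) ≤ log t * -β + 1 := by nlinarith [log_le_sub_one_of_pos ht]
      _ ≤ exp (log t * -β) := add_one_le_exp _
  have hat : a = t * b := (div_mul_cancel₀ a hb.ne').symm
  have hlhs : a ^ (-β) - b ^ (-β) = b ^ (-β) * (t ^ (-β) - 1) := by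
    rw [hat, mul_rpow ht.le hb.le]; ring
  have hrhs : β * b ^ (-(β + 1)) * (b - a) = b ^ (-β) * (β * (1 - t)) := by
    rw [neg_add, rpow_add hb, rpow_neg_one, hat]; field_simp
  rw [hlhs, hrhs]
  gcongr
  linarith

lemma rpow_neg_sub_rpow_neg_ge_of_add_le {β a b δ L : ℝ} (hβ : 0 ≤ β) (ha : 0 < a)
    (hδ : 0 ≤ δ) (hab : a + δ ≤ b) (hbL : b ≤ L) :
    β * L ^ (-(β + 1)) * δ ≤ a ^ (-β) - b ^ (-β) := by
  have hb : 0 < b := by linarith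
  calc β * L ^ (-(β + 1)) * δ ≤ β * b ^ (-(β + 1)) * (b - a) := by
        gcongr ?_ * ?_ * ?_
        · exact rpow_le_rpow_of_nonpos hb hbL (by linarith)
        · linarith
    _ ≤ a ^ (-β) - b ^ (-β) := rpow_neg_sub_rpow_neg_ge hβ ha (by linarith)

namespace EuclideanSpace

variable {ι : Type*} [Fintype ι]

lemma dist_add_le_dist_of_forall_le [Nonempty ι] {x z w : EuclideanSpace ℝ ι} {c : ℝ}
    (hc : 0 ≤ c) (hxw : ∀ i, x i ≤ w i) (hzx : ∀ i, z i + c ≤ x i) :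
    dist x w + c ≤ dist z w := by
  set a : ι → ℝ := fun i => w i - x i
  have ha : ∀ i, 0 ≤ a i := fun i => sub_nonneg.2 (hxw i)
  have hsq : ∀ v : EuclideanSpace ℝ ι, dist v w ^ 2 = ∑ i, (w i - v i) ^ 2 := fun v => by
    simp only [PiLp.dist_sq_eq_of_L2, Real.dist_eq, sq_abs, ← neg_sub (w _), neg_sq]
  have hdist_le_sum : dist x w ≤ ∑ i, a i := by
    refine (pow_le_pow_iff_left₀ dist_nonneg (Finset.sum_nonneg fun i _ => ha i)
      two_ne_zero).1 ?_
    rw [hsq]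
    exact Finset.sum_sq_le_sq_sum_of_nonneg fun i _ => ha i
  have hcard : (1 : ℝ) ≤ Fintype.card ι := by exact_mod_cast Fintype.card_pos
  refine (pow_le_pow_iff_left₀ (by positivity) dist_nonneg two_ne_zero).1 ?_
  calc (dist x w + c) ^ 2 ≤ ∑ i, a i ^ 2 + 2 * c * ∑ i, a i + Fintype.card ι * c ^ 2 := by
        rw [← hsq]; nlinarith
    _ = ∑ i, (a i + c) ^ 2 := by
        simp only [add_sq, Finset.sum_add_distrib, mul_right_comm _ c, ← Finset.sum_mul,
          ← Finset.mul_sum, Finset.sum_const, Finset.card_univ, nsmul_eq_mul]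
    _ ≤ ∑ i, (w i - z i) ^ 2 := Finset.sum_le_sum fun i _ => by
        gcongr
        · linarith [ha i]
        · linarith [hzx i]
    _ = dist z w ^ 2 := (hsq z).symm

end EuclideanSpace

lemma sub_smul_uvec_apply {n : ℕ} (x : Rn n) (r : ℝ) (i : Fin n) :
    (x - r • uvec n) i = x i - r := by
  simp [uvec]

lemma norm_uvec (n : ℕ) : ‖uvec n‖ = √n := by
  simp [EuclideanSpace.norm_eq, uvec]

section BallSets

variable {n : ℕ} {xB x z w : Rn n} {R : ℝ}

lemma apply_mem_Ioc_of_mem_C1set (hx : x ∈ C1set xB R) (i : Fin n) :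
    xB i - R / (6 * √n) < x i ∧ x i ≤ xB i - R / (12 * √n) := by
  obtain ⟨hball, hle⟩ := hx
  have hi := (PiLp.dist_apply_le x _ i).trans_lt (mem_ball.1 hball)
  rw [sub_smul_uvec_apply, Real.dist_eq] at hi
  have := hle i
  rw [sub_smul_uvec_apply] at this
  constructor <;> linarith [(abs_lt.1 hi).1, show R / (6 * √n) = 2 * (R / (12 * √n)) by ring]

lemma apply_le_of_mem_C2set (hz : z ∈ C2set xB R) (i : Fin n) : z i ≤ xB i - R / (3 * √n) := by
  simpa only [sub_smul_uvec_apply] using hz.2 i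

lemma dist_le_of_mem_C2set (hz : z ∈ C2set xB R) : dist z xB ≤ R := by
  have hR : 0 < R := by linarith [dist_nonneg.trans_lt (mem_ball.1 hz.1)]
  have hcenter : dist (xB - (R / (3 * √n)) • uvec n) xB ≤ R / 3 := by
    rw [dist_eq_norm, sub_sub_cancel_left, norm_neg, norm_smul, norm_uvec, Real.norm_eq_abs,
      abs_of_nonneg (by positivity)]
    rcases eq_or_ne (√n) 0 with h | h
    · rw [h, mul_zero]; positivity
    · exact (by field_simp : R / (3 * √n) * √n = R / 3).le
  linarith [dist_triangle z (xB - (R / (3 * √n)) • uvec n) xB, mem_ball.1 hz.1]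

lemma dist_pos_of_mem_C1set_of_mem_Aset (hn : n ≠ 0) (hx : x ∈ C1set xB R) (hw : w ∈ Aset xB) :
    0 < dist x w := by
  have hr : 0 < R / (12 * √n) := dist_nonneg.trans_lt (mem_ball.1 hx.1)
  let i : Fin n := ⟨0, Nat.pos_of_ne_zero hn⟩
  refine dist_pos.2 fun hxw => ?_
  linarith [(apply_mem_Ioc_of_mem_C1set hx i).2, hw i, congrArg (· i) hxw]

lemma dist_add_le_dist_of_mem_C1set_of_mem_C2set (hn : n ≠ 0) (hx : x ∈ C1set xB R)
    (hz : z ∈ C2set xB R) (hw : w ∈ Aset xB) : dist x w + R / (6 * √n) ≤ dist z w := by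
  have : Nonempty (Fin n) := ⟨⟨0, Nat.pos_of_ne_zero hn⟩⟩
  have hr : 0 < R / (12 * √n) := dist_nonneg.trans_lt (mem_ball.1 hx.1)
  have h6 : R / (6 * √n) = 2 * (R / (12 * √n)) := by ring
  have h3 : R / (3 * √n) = 4 * (R / (12 * √n)) := by ring
  refine EuclideanSpace.dist_add_le_dist_of_forall_le (by linarith) (fun i => ?_) (fun i => ?_)
  · linarith [(apply_mem_Ioc_of_mem_C1set hx i).2, hw i]
  · linarith [(apply_mem_Ioc_of_mem_C1set hx i).1, apply_le_of_mem_C2set hz i]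

end BallSets

lemma volume_ball_toReal_rpow_inv {n : ℕ} (hn : n ≠ 0) (x : Rn n) {R : ℝ} (hR : 0 < R) :
    (volume (ball x R)).toReal ^ ((n : ℝ)⁻¹) =
      (volume (ball (0 : Rn n) 1)).toReal ^ ((n : ℝ)⁻¹) * R := by
  rw [Measure.addHaar_ball_of_pos _ _ hR, finrank_euclideanSpace_fin, ENNReal.toReal_mul,
    ENNReal.toReal_ofReal (by positivity), mul_rpow (by positivity) ENNReal.toReal_nonneg,
    ← rpow_natCast, ← rpow_mul hR.le, mul_inv_cancel₀ (by exact_mod_cast hn), rpow_one, mul_comm]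

theorem statement10_general {n m : ℕ} (hn : 1 ≤ n) (hm : 1 ≤ m) (γ : ℝ)
    (hγ : γ < m * n) :
    ∃ C : ℝ, 0 < C ∧ ∀ (xB : Rn n) (R : ℝ), 0 < R →
      ∀ x ∈ C1set xB R, ∀ z ∈ C2set xB R, ∀ y : Fin m → Rn n,
        (∀ j, y j ∈ Aset xB) →
        C * (volume (ball xB R)).toReal ^ ((n : ℝ)⁻¹) *
            ((volume (ball xB R)).toReal ^ ((n : ℝ)⁻¹) + ∑ j, dist xB (y j)) ^
              (-((m : ℝ) * n - γ + 1)) ≤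
          (∑ j, dist x (y j)) ^ (-((m : ℝ) * n - γ)) -
            (∑ j, dist z (y j)) ^ (-((m : ℝ) * n - γ)) := by
  have hn0 : n ≠ 0 := Nat.one_le_iff_ne_zero.1 hn
  have hm1 : (1 : ℝ) ≤ m := by exact_mod_cast hm
  have hβ : 0 < (m : ℝ) * n - γ := sub_pos.2 hγ
  have hvol := volume_ball_toReal_rpow_inv hn0
  set κ := (volume (ball (0 : Rn n) 1)).toReal ^ ((n : ℝ)⁻¹)
  have hκ : 0 < κ := rpow_pos_of_pos
    (ENNReal.toReal_pos (measure_ball_pos _ _ one_pos).ne' measure_ball_lt_top.ne) _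
  clear_value κ
  set K := (m : ℝ) / κ + 1
  refine ⟨((m : ℝ) * n - γ) * K ^ (-((m : ℝ) * n - γ + 1)) / (6 * √n * κ), by positivity, ?_⟩
  intro xB R hR x hx z hz y hy
  rw [hvol xB hR]
  set D := ∑ j, dist xB (y j)
  have hx_pos : 0 < ∑ j, dist x (y j) := Finset.sum_pos
    (fun j _ => dist_pos_of_mem_C1set_of_mem_Aset hn0 hx (hy j))
    (Finset.univ_nonempty_iff.2 ⟨⟨0, hm⟩⟩)
  have hgap : ∑ j, dist x (y j) + R / (6 * √n) ≤ ∑ j, dist z (y j) := by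
    have h := Finset.sum_le_sum fun j (_ : j ∈ Finset.univ) =>
      dist_add_le_dist_of_mem_C1set_of_mem_C2set hn0 hx hz (hy j)
    rw [Finset.sum_add_distrib, Fin.sum_const, nsmul_eq_mul] at h
    linarith [le_mul_of_one_le_left (by positivity : 0 ≤ R / (6 * √n)) hm1]
  have hz_le : ∑ j, dist z (y j) ≤ K * (κ * R + D) := by
    have h := Finset.sum_le_sum fun j (_ : j ∈ Finset.univ) =>
      (dist_triangle z xB (y j)).trans (add_le_add_left (dist_le_of_mem_C2set hz) _)
    rw [Finset.sum_add_distrib, Fin.sum_const, nsmul_eq_mul] at h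
    have hK : K * (κ * R + D) = m * R + D + (m * D / κ + κ * R) := by
      simp only [K]; field_simp; ring
    linarith [show 0 ≤ m * D / κ + κ * R by positivity]
  calc _ = ((m : ℝ) * n - γ) * (K * (κ * R + D)) ^ (-((m : ℝ) * n - γ + 1)) * (R / (6 * √n)) := by
        rw [mul_rpow (by positivity) (by positivity)]
        field_simp
    _ ≤ _ := rpow_neg_sub_rpow_neg_ge_of_add_le hβ.le hx_pos (by positivity) hgap hz_le

/-- the pointwise kernel-difference lower bound on the sets
`A`, `C₁`, `C₂` associated to a ball `B(x_B,R)`. -/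
theorem statement10 {n m : ℕ} (hn : 1 ≤ n) (hm : 1 ≤ m) (γ : ℝ) (hγ0 : 0 < γ)
    (hγ : γ < m * n) :
    ∃ C : ℝ, 0 < C ∧ ∀ (xB : Rn n) (R : ℝ), 0 < R →
      ∀ x ∈ C1set xB R, ∀ z ∈ C2set xB R, ∀ y : Fin m → Rn n,
        (∀ j, y j ∈ Aset xB) →
        C * (volume (ball xB R)).toReal ^ ((n : ℝ)⁻¹) *
            ((volume (ball xB R)).toReal ^ ((n : ℝ)⁻¹) + ∑ j, dist xB (y j)) ^
              (-((m : ℝ) * n - γ + 1)) ≤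
          (∑ j, dist x (y j)) ^ (-((m : ℝ) * n - γ)) -
            (∑ j, dist z (y j)) ^ (-((m : ℝ) * n - γ)) :=
  statement10_general hn hm γ hγ
end
end

section
/- Let n ≥ 1 and α > -n. There exist positive constants c_1, c_2 depending only on n and α such that for every R > 0 and every ball B = B(x_B,R) in ℝ^n: c_1·R^n·(max{R,|x_B|})^α ≤ ∫_B |x|^α dx ≤ c_2·R^n·(max{R,|x_B|})^α. -/
open MeasureTheory Metric Set
open scoped ENNReal NNReal BigOperators Classical

noncomputable section

/-
Write `M = max R ‖x_B‖`; every point of `B(x_B, R)` has `‖x‖ ≤ 2M`. Moving the centre by `R/2`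
away from the origin gives a ball of radius `R/4` inside `B(x_B, R)` on which `‖x‖ ≥ M/4`, so
`‖x‖ ^ α ≍ M ^ α` there: this is the lower bound. For the upper bound, if `‖x_B‖ ≥ 2R` then
`‖x‖ ≍ M` on all of `B(x_B, R)`; otherwise `R ≍ M` and `B(x_B, R) ⊆ B(0, 3R)`, whose integral is
`(3R) ^ (n + α)` times the integral over the unit ball by homogeneity, finite because `α > -n`.
-/

theorem Real.rpow_le_rpow_mul_of_le_mul {a s t : ℝ} (α : ℝ) (ha : 1 ≤ a) (hs : 0 < s)
    (hst : s ≤ a * t) (hts : t ≤ a * s) : t ^ α ≤ a ^ |α| * s ^ α := by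
  have ha0 : 0 < a := one_pos.trans_le ha
  have ht : 0 < t := pos_of_mul_pos_right (hs.trans_le hst) ha0.le
  rcases le_total 0 α with hα | hα
  · calc t ^ α ≤ (a * s) ^ α := Real.rpow_le_rpow ht.le hts hα
      _ = a ^ |α| * s ^ α := by rw [Real.mul_rpow ha0.le hs.le, abs_of_nonneg hα]
  · calc t ^ α ≤ (a⁻¹ * s) ^ α :=
          Real.rpow_le_rpow_of_nonpos (by positivity) (by rwa [inv_mul_le_iff₀ ha0]) hα
      _ = a ^ |α| * s ^ α := by
          rw [Real.mul_rpow (inv_nonneg.2 ha0.le) hs.le, Real.inv_rpow ha0.le,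
            ← Real.rpow_neg ha0.le, abs_of_nonpos hα]

section Metric
variable {E : Type*} [NormedAddCommGroup E]

theorem norm_le_two_mul_max_of_mem_ball {x xB : E} {R : ℝ} (hx : x ∈ ball xB R) :
    ‖x‖ ≤ 2 * max R ‖xB‖ := by
  have := norm_le_norm_add_norm_sub' x xB
  rw [← dist_eq_norm] at this
  linarith [mem_ball.1 hx, le_max_left R ‖xB‖, le_max_right R ‖xB‖]

variable [NormedSpace ℝ E] [Nontrivial E]

theorem exists_dist_eq_and_max_le_norm (x : E) {s : ℝ} (hs : 0 ≤ s) :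
    ∃ z, dist z x = s ∧ max ‖x‖ s ≤ ‖z‖ := by
  obtain ⟨v, hv⟩ := exists_norm_eq E hs
  -- `x + v` and `x - v` differ by `2 • v` and add up to `2 • x`
  have hsum : 2 * max ‖x‖ s ≤ ‖x + v‖ + ‖x - v‖ := by
    have h1 := norm_add_le (x + v) (x - v)
    have h2 := norm_sub_le (x + v) (x - v)
    rw [add_add_sub_cancel, ← two_smul ℝ, norm_smul, Real.norm_two] at h1
    rw [add_sub_sub_cancel, ← two_smul ℝ, norm_smul, Real.norm_two, hv] at h2
    rw [mul_max_of_nonneg _ _ zero_le_two]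
    exact max_le h1 h2
  rcases le_total (max ‖x‖ s) ‖x + v‖ with h | h
  · exact ⟨x + v, by rw [dist_eq_norm, add_sub_cancel_left, hv], h⟩
  · exact ⟨x - v, by rw [dist_eq_norm, sub_sub_cancel_left, norm_neg, hv], by linarith⟩

theorem exists_ball_subset_ball_and_max_le_four_mul_norm (xB : E) {R : ℝ} (hR : 0 < R) :
    ∃ z, ball z (R / 4) ⊆ ball xB R ∧ ∀ x ∈ ball z (R / 4), max R ‖xB‖ ≤ 4 * ‖x‖ := by
  obtain ⟨z, hz, hxz⟩ := exists_dist_eq_and_max_le_norm xB (by positivity : 0 ≤ R / 2)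
  refine ⟨z, ball_subset_ball' (by linarith), fun x hx => ?_⟩
  have := norm_sub_norm_le z x
  rw [← dist_eq_norm, dist_comm] at this
  have hmax : max R ‖xB‖ ≤ 2 * max ‖xB‖ (R / 2) := by
    rw [mul_max_of_nonneg _ _ zero_le_two]
    exact max_le (le_max_of_le_right (by linarith))
      (le_max_of_le_left (by linarith [norm_nonneg xB]))
  linarith [mem_ball.1 hx, le_max_left R ‖xB‖]

end Metric

section Haar
variable {E : Type*} [NormedAddCommGroup E] [NormedSpace ℝ E] [MeasurableSpace E] [BorelSpace E]
  [FiniteDimensional ℝ E] (μ : Measure E) [μ.IsAddHaarMeasure]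

theorem MeasureTheory.Measure.lintegral_comp_smul_of_pos (f : E → ℝ≥0∞) {r : ℝ} (hr : 0 < r) :
    ∫⁻ x, f (r • x) ∂μ = ENNReal.ofReal ((r ^ Module.finrank ℝ E)⁻¹) * ∫⁻ x, f x ∂μ := by
  rw [← smul_eq_mul, ← lintegral_smul_measure, ← abs_of_pos (inv_pos.2 (pow_pos hr _)),
    ← Measure.map_addHaar_smul μ hr.ne']
  exact (lintegral_map_equiv f (Homeomorph.smulOfNeZero r hr.ne').toMeasurableEquiv).symm

theorem lintegral_ball_zero_norm_rpow (α : ℝ) {r : ℝ} (hr : 0 < r) :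
    ∫⁻ x in ball (0 : E) r, ENNReal.ofReal (‖x‖ ^ α) ∂μ =
      ENNReal.ofReal (r ^ ((Module.finrank ℝ E : ℝ) + α)) *
        ∫⁻ x in ball (0 : E) 1, ENNReal.ofReal (‖x‖ ^ α) ∂μ := by
  have hscale : ∀ y : E, (ball (0 : E) r).indicator (fun x => ENNReal.ofReal (‖x‖ ^ α)) (r • y) =
      ENNReal.ofReal (r ^ α) * (ball 0 1).indicator (fun x => ENNReal.ofReal (‖x‖ ^ α)) y := by
    intro y
    have hmem : r • y ∈ ball (0 : E) r ↔ y ∈ ball (0 : E) 1 := by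
      simp only [mem_ball_zero_iff, norm_smul, Real.norm_of_nonneg hr.le]
      exact mul_lt_iff_lt_one_right hr
    by_cases hy : y ∈ ball (0 : E) 1
    · rw [indicator_of_mem (hmem.2 hy), indicator_of_mem hy, ← ENNReal.ofReal_mul (by positivity),
        norm_smul, Real.norm_of_nonneg hr.le, Real.mul_rpow hr.le (norm_nonneg y)]
    · rw [indicator_of_notMem (mt hmem.1 hy), indicator_of_notMem hy, mul_zero]
  have key := μ.lintegral_comp_smul_of_pos
    ((ball (0 : E) r).indicator fun x => ENNReal.ofReal (‖x‖ ^ α)) hr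
  simp_rw [hscale, lintegral_indicator measurableSet_ball,
    lintegral_const_mul' _ _ ENNReal.ofReal_ne_top] at key
  have hrd : (0 : ℝ) < r ^ Module.finrank ℝ E := pow_pos hr _
  calc ∫⁻ x in ball (0 : E) r, ENNReal.ofReal (‖x‖ ^ α) ∂μ
      = ENNReal.ofReal (r ^ Module.finrank ℝ E) * (ENNReal.ofReal ((r ^ Module.finrank ℝ E)⁻¹) *
          ∫⁻ x in ball (0 : E) r, ENNReal.ofReal (‖x‖ ^ α) ∂μ) := by
        rw [← mul_assoc, ← ENNReal.ofReal_mul hrd.le, mul_inv_cancel₀ hrd.ne', ENNReal.ofReal_one,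
          one_mul]
    _ = ENNReal.ofReal (r ^ ((Module.finrank ℝ E : ℝ) + α)) *
          ∫⁻ x in ball (0 : E) 1, ENNReal.ofReal (‖x‖ ^ α) ∂μ := by
        rw [← key, ← mul_assoc, ← ENNReal.ofReal_mul hrd.le, ← Real.rpow_natCast,
          ← Real.rpow_add hr, lintegral_indicator measurableSet_ball]

variable [Nontrivial E]

theorem lintegral_unitBall_norm_rpow_lt_top {α : ℝ} (hα : -(Module.finrank ℝ E : ℝ) < α) :
    ∫⁻ x in ball (0 : E) 1, ENNReal.ofReal (‖x‖ ^ α) ∂μ < ∞ := by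
  have hint : IntegrableOn (fun x : E => ‖x‖ ^ α) (ball 0 1) μ :=
    integrableOn_ball_of_norm_le_rpow Module.finrank_pos (C := 1) (α := -α) (by linarith)
      (ae_of_all _ fun x => by simp [abs_of_nonneg (Real.rpow_nonneg (norm_nonneg x) α)])
      (measurable_norm.pow_const α).aestronglyMeasurable
  exact (hasFiniteIntegral_iff_ofReal (ae_of_all _ fun x => by positivity)).1 hint.2

theorem le_lintegral_ball_norm_rpow (α : ℝ) (xB : E) {R : ℝ} (hR : 0 < R) :
    ENNReal.ofReal ((4 ^ Module.finrank ℝ E)⁻¹ * (4 ^ |α|)⁻¹ * μ.real (ball 0 1) *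
        R ^ Module.finrank ℝ E * max R ‖xB‖ ^ α) ≤
      ∫⁻ x in ball xB R, ENNReal.ofReal (‖x‖ ^ α) ∂μ := by
  set M := max R ‖xB‖
  have hM : 0 < M := hR.trans_le (le_max_left _ _)
  obtain ⟨z, hsub, hz⟩ := exists_ball_subset_ball_and_max_le_four_mul_norm xB hR
  have hpt : ∀ x ∈ ball z (R / 4),
      ENNReal.ofReal ((4 ^ |α|)⁻¹ * M ^ α) ≤ ENNReal.ofReal (‖x‖ ^ α) := by
    intro x hx
    have hx4 := hz x hx
    have hx2 := norm_le_two_mul_max_of_mem_ball (hsub hx)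
    refine ENNReal.ofReal_le_ofReal ?_
    rw [inv_mul_le_iff₀ (by positivity)]
    exact Real.rpow_le_rpow_mul_of_le_mul α (by norm_num) (by linarith) (by linarith) hx4
  calc ENNReal.ofReal ((4 ^ Module.finrank ℝ E)⁻¹ * (4 ^ |α|)⁻¹ * μ.real (ball 0 1) *
        R ^ Module.finrank ℝ E * M ^ α)
      = ENNReal.ofReal ((4 ^ |α|)⁻¹ * M ^ α) * μ (ball z (R / 4)) := by
        rw [μ.addHaar_ball z (by positivity), ← ofReal_measureReal measure_ball_lt_top.ne,
          ← ENNReal.ofReal_mul (by positivity), ← ENNReal.ofReal_mul (by positivity), div_pow]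
        ring_nf
    _ ≤ ∫⁻ x in ball z (R / 4), ENNReal.ofReal (‖x‖ ^ α) ∂μ :=
        (setLIntegral_const _ _).symm.trans_le (setLIntegral_mono' measurableSet_ball hpt)
    _ ≤ ∫⁻ x in ball xB R, ENNReal.ofReal (‖x‖ ^ α) ∂μ := lintegral_mono_set hsub

theorem lintegral_ball_norm_rpow_le_of_two_mul_le (α : ℝ) {xB : E} {R : ℝ} (hR : 0 < R)
    (hfar : 2 * R ≤ ‖xB‖) :
    ∫⁻ x in ball xB R, ENNReal.ofReal (‖x‖ ^ α) ∂μ ≤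
      ENNReal.ofReal (2 ^ |α| * μ.real (ball 0 1) * R ^ Module.finrank ℝ E * max R ‖xB‖ ^ α) := by
  set M := max R ‖xB‖
  have hM : M = ‖xB‖ := max_eq_right (by linarith)
  have hpt : ∀ x ∈ ball xB R, ENNReal.ofReal (‖x‖ ^ α) ≤ ENNReal.ofReal (2 ^ |α| * M ^ α) := by
    intro x hx
    have hx2 := norm_le_two_mul_max_of_mem_ball hx
    have := norm_sub_norm_le xB x
    rw [← dist_eq_norm, dist_comm] at this
    exact ENNReal.ofReal_le_ofReal <| Real.rpow_le_rpow_mul_of_le_mul α one_le_two (by linarith)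
      (by linarith [mem_ball.1 hx]) hx2
  calc ∫⁻ x in ball xB R, ENNReal.ofReal (‖x‖ ^ α) ∂μ
      ≤ ENNReal.ofReal (2 ^ |α| * M ^ α) * μ (ball xB R) :=
        (setLIntegral_mono measurable_const hpt).trans_eq (setLIntegral_const _ _)
    _ = ENNReal.ofReal (2 ^ |α| * μ.real (ball 0 1) * R ^ Module.finrank ℝ E * M ^ α) := by
        rw [μ.addHaar_ball xB hR.le, ← ofReal_measureReal measure_ball_lt_top.ne,
          ← ENNReal.ofReal_mul (by positivity), ← ENNReal.ofReal_mul (by positivity)]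
        ring_nf

theorem lintegral_ball_norm_rpow_le_of_le_two_mul {α : ℝ} (hα : -(Module.finrank ℝ E : ℝ) < α)
    {xB : E} {R : ℝ} (hR : 0 < R) (hnear : ‖xB‖ ≤ 2 * R) :
    ∫⁻ x in ball xB R, ENNReal.ofReal (‖x‖ ^ α) ∂μ ≤
      ENNReal.ofReal (2 ^ |α| * 3 ^ ((Module.finrank ℝ E : ℝ) + α) *
        (∫⁻ x in ball (0 : E) 1, ENNReal.ofReal (‖x‖ ^ α) ∂μ).toReal *
        R ^ Module.finrank ℝ E * max R ‖xB‖ ^ α) := by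
  set M := max R ‖xB‖
  set I := ∫⁻ x in ball (0 : E) 1, ENNReal.ofReal (‖x‖ ^ α) ∂μ
  have hsub : ball xB R ⊆ ball 0 (3 * R) := by
    intro x hx
    have := norm_le_norm_add_norm_sub' x xB
    rw [← dist_eq_norm] at this
    rw [mem_ball_zero_iff]
    linarith [mem_ball.1 hx]
  have hRM : R ^ α ≤ 2 ^ |α| * M ^ α :=
    Real.rpow_le_rpow_mul_of_le_mul α one_le_two (hR.trans_le (le_max_left _ _))
      (max_le (by linarith) hnear) (by linarith [le_max_left R ‖xB‖])
  calc ∫⁻ x in ball xB R, ENNReal.ofReal (‖x‖ ^ α) ∂μ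
      ≤ ∫⁻ x in ball (0 : E) (3 * R), ENNReal.ofReal (‖x‖ ^ α) ∂μ := lintegral_mono_set hsub
    _ = ENNReal.ofReal ((3 * R) ^ ((Module.finrank ℝ E : ℝ) + α) * I.toReal) := by
        rw [lintegral_ball_zero_norm_rpow μ α (by positivity), ENNReal.ofReal_mul (by positivity),
          ENNReal.ofReal_toReal (lintegral_unitBall_norm_rpow_lt_top μ hα).ne]
    _ ≤ _ := by
        refine ENNReal.ofReal_le_ofReal ?_
        rw [Real.mul_rpow (by norm_num) hR.le, Real.rpow_add hR, Real.rpow_natCast]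
        calc 3 ^ ((Module.finrank ℝ E : ℝ) + α) * (R ^ Module.finrank ℝ E * R ^ α) * I.toReal
            ≤ 3 ^ ((Module.finrank ℝ E : ℝ) + α) * (R ^ Module.finrank ℝ E * (2 ^ |α| * M ^ α))
              * I.toReal := by gcongr
          _ = _ := by ring

theorem lintegral_ball_norm_rpow_le {α : ℝ} (hα : -(Module.finrank ℝ E : ℝ) < α)
    (xB : E) {R : ℝ} (hR : 0 < R) :
    ∫⁻ x in ball xB R, ENNReal.ofReal (‖x‖ ^ α) ∂μ ≤
      ENNReal.ofReal (2 ^ |α| * (μ.real (ball 0 1) + 3 ^ ((Module.finrank ℝ E : ℝ) + α) *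
        (∫⁻ x in ball (0 : E) 1, ENNReal.ofReal (‖x‖ ^ α) ∂μ).toReal) *
        R ^ Module.finrank ℝ E * max R ‖xB‖ ^ α) := by
  rcases le_total (2 * R) ‖xB‖ with hfar | hnear
  · refine (lintegral_ball_norm_rpow_le_of_two_mul_le μ α hR hfar).trans
      (ENNReal.ofReal_le_ofReal ?_)
    gcongr
    exact le_add_of_nonneg_right (by positivity)
  · refine (lintegral_ball_norm_rpow_le_of_le_two_mul μ hα hR hnear).trans
      (ENNReal.ofReal_le_ofReal ?_)
    rw [mul_add, add_mul, add_mul]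
    refine le_add_of_nonneg_left (by positivity) |>.trans_eq' (by ring)

end Haar

/-- for `α > -n`, `∫_B |x|^α dx ≈ Rⁿ (max{R,|x_B|})^α` with
constants depending only on `n` and `α`. -/
theorem statement11 {n : ℕ} (hn : 1 ≤ n) (α : ℝ) (hα : -(n : ℝ) < α) :
    ∃ c₁ c₂ : ℝ, 0 < c₁ ∧ 0 < c₂ ∧ ∀ (xB : Rn n) (R : ℝ), 0 < R →
      ENNReal.ofReal (c₁ * R ^ n * (max R ‖xB‖) ^ α) ≤
        (∫⁻ x in ball xB R, ENNReal.ofReal (‖x‖ ^ α)) ∧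
      (∫⁻ x in ball xB R, ENNReal.ofReal (‖x‖ ^ α)) ≤
        ENNReal.ofReal (c₂ * R ^ n * (max R ‖xB‖) ^ α) := by
  have hd : Module.finrank ℝ (Rn n) = n := finrank_euclideanSpace_fin
  have : Nontrivial (Rn n) := Module.nontrivial_of_finrank_pos (R := ℝ) (by omega)
  have hV : 0 < volume.real (ball (0 : Rn n) 1) :=
    ENNReal.toReal_pos (measure_ball_pos _ _ one_pos).ne' measure_ball_lt_top.ne
  refine ⟨(4 ^ n)⁻¹ * (4 ^ |α|)⁻¹ * volume.real (ball (0 : Rn n) 1),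
    2 ^ |α| * (volume.real (ball (0 : Rn n) 1) + 3 ^ ((n : ℝ) + α) *
      (∫⁻ x in ball (0 : Rn n) 1, ENNReal.ofReal (‖x‖ ^ α)).toReal),
    by positivity, by positivity, fun xB R hR => ?_⟩
  have hlow := le_lintegral_ball_norm_rpow volume α xB hR
  have hup := lintegral_ball_norm_rpow_le volume (by rwa [hd]) xB hR
  rw [hd] at hlow hup
  exact ⟨hlow, hup⟩
end
end
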